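/- arXiv:0810.1192 — 14 statements merged into one kernel-verified Lean document; each statement's English description precedes it below -/
import Mathlib

section
/- For each positive integer n and each nonzero complex number z, the n×n matrix A_{n,z} with entries (A_{n,z})_{j,k} = z^{j+k-1}/(j+k-1)! (for 1 ≤ j,k ≤ n) is invertible. -/
open Matrix Polynomial

/-!
Pulling out the diagonal matrices `diag(z^(j+1))` and `diag(z^k)` reduces the claim to the
invertibility of the Hankel matrix `H j k = 1 / (j+k+1)!`. Multiplying its rows by `(j+n)!` and
reversing its columns gives the matrix `(j+n).descFactorial k`, whose `k`-th column is the monic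
degree-`k` polynomial `descPochhammer k` evaluated at the distinct nodes `j + n`; its determinant
is therefore a nonzero Vandermonde determinant.
-/

theorem Matrix.det_of_descFactorial_ne_zero {R : Type*} [CommRing R] [IsDomain R] [CharZero R]
    {n : ℕ} {v : Fin n → ℕ} (hv : Function.Injective v) :
    (of fun j (k : Fin n) => ((v j).descFactorial k : R)).det ≠ 0 := by
  have hcols : (of fun j (k : Fin n) => ((v j).descFactorial k : R)) =
      of fun j (k : Fin n) => (descPochhammer R k).eval (v j : R) := by
    ext j k
    simp only [of_apply, descPochhammer_eval_eq_descFactorial]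
  rw [hcols, ← det_eval_matrixOfPolynomials_eq_det_vandermonde _ _
    (fun k => descPochhammer_natDegree R k) (fun k => monic_descPochhammer R k)]
  exact det_vandermonde_ne_zero_iff.mpr fun a b hab => hv (Nat.cast_injective hab)

theorem Matrix.det_hankel_inv_factorial_ne_zero {K : Type*} [Field K] [CharZero K] (n : ℕ) :
    (of fun j k : Fin n => (((j : ℕ) + k + 1).factorial : K)⁻¹).det ≠ 0 := by
  set H := of fun j k : Fin n => (((j : ℕ) + k + 1).factorial : K)⁻¹
  have hscale : diagonal (fun j : Fin n => (((j : ℕ) + n).factorial : K)) *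
      H.submatrix id Fin.revPerm =
        of fun (j k : Fin n) => (((j : ℕ) + n).descFactorial k : K) := by
    ext j k
    have hrev : (j : ℕ) + (Fin.revPerm k : ℕ) + 1 = (j : ℕ) + n - k := by
      simp only [Fin.revPerm_apply, Fin.val_rev]
      omega
    have hfac := Nat.factorial_mul_descFactorial (show (k : ℕ) ≤ (j : ℕ) + n by omega)
    simp only [H, diagonal_mul, submatrix_apply, id, of_apply]
    rw [hrev, ← hfac, Nat.cast_mul,
      mul_comm (((j : ℕ) + n - k).factorial : K), mul_assoc,
      mul_inv_cancel₀ (Nat.cast_ne_zero.mpr (Nat.factorial_ne_zero _)), mul_one]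
  have hdet := congrArg det hscale
  rw [det_mul, det_permute', det_diagonal] at hdet
  intro hH
  rw [hH, mul_zero, mul_zero] at hdet
  exact det_of_descFactorial_ne_zero (fun a b hab => Fin.ext (by simpa using hab)) hdet.symm

theorem Matrix.of_pow_add_mul_eq_diagonal_mul_diagonal {R : Type*} [CommSemiring R] {n : ℕ}
    (z : R) (M : Matrix (Fin n) (Fin n) R) :
    (of fun j k : Fin n => z ^ ((j : ℕ) + k + 1) * M j k) =
      diagonal (fun j : Fin n => z ^ ((j : ℕ) + 1)) * M *
        diagonal (fun k : Fin n => z ^ (k : ℕ)) := by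
  ext j k
  rw [mul_diagonal, diagonal_mul, of_apply, add_right_comm, pow_add]
  ring

theorem stmt_0_general (n : ℕ) (z : ℂ) (hz : z ≠ 0) :
    IsUnit (Matrix.of fun j k : Fin n =>
      z ^ ((j : ℕ) + (k : ℕ) + 1) / ((Nat.factorial ((j : ℕ) + (k : ℕ) + 1) : ℂ))) := by
  have hpow : ∀ m : ℕ, IsUnit (z ^ m) := fun m => (Ne.isUnit hz).pow m
  have hfactor := of_pow_add_mul_eq_diagonal_mul_diagonal z
    (of fun j k : Fin n => (((j : ℕ) + k + 1).factorial : ℂ)⁻¹)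
  simp only [of_apply, ← div_eq_mul_inv] at hfactor
  rw [hfactor]
  refine (IsUnit.mul (isUnit_diagonal.mpr ?_) ?_).mul (isUnit_diagonal.mpr ?_)
  · exact Pi.isUnit_iff.mpr fun j => hpow _
  · exact (isUnit_iff_isUnit_det _).mpr (det_hankel_inv_factorial_ne_zero n).isUnit
  · exact Pi.isUnit_iff.mpr fun k => hpow _

/-- For each positive integer `n` and each nonzero complex number `z`, the `n × n` matrix
`A_{n,z}` with entries `(A_{n,z})_{j,k} = z^(j+k-1)/(j+k-1)!` (for `1 ≤ j, k ≤ n`)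
is invertible. -/
theorem stmt_0 (n : ℕ) (hn : 0 < n) (z : ℂ) (hz : z ≠ 0) :
    IsUnit (Matrix.of fun j k : Fin n =>
      z ^ ((j : ℕ) + (k : ℕ) + 1) / ((Nat.factorial ((j : ℕ) + (k : ℕ) + 1) : ℂ))) :=
  stmt_0_general n z hz
end

section
/- For positive integers n and k, the n×n matrix M_{n,k} with entries (M_{n,k})_{j,l} = (k+n-l)!/(k+n-l+j-1)! satisfies, for n ≥ 2, the recurrence det M_{n,k} = ((n-1)! · k! · (k+1)!)/((k+n-1)! · (k+n)!) · det M_{n-1,k+2}. Consequently det M_{n,k} ≠ 0 for all n,k. -/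
/-!
Reversing the order of rows and columns and scaling column `l` by `(k+m+l)!/(k+l)!` turns
`M_{m+1,k}` into the matrix with entries `(k+m+l)(k+m+l-1)⋯(k+m+l-j+1)`. Row `j` is the monic
degree-`j` polynomial `descPochhammer j` evaluated at the points `k+m+l`, so this determinant is the
Vandermonde determinant of `m+1` consecutive integers, `sf m`. Hence
`det M_{m+1,k} = sf m · ∏_{l ≤ m} (k+l)!/(k+m+l)!`, which is nonzero, and the recurrence is a
comparison of these products of factorials.
-/

open Finset Matrix
open scoped Nat

theorem Matrix.det_descFactorial_eq_det_vandermonde {R : Type*} [CommRing R] [IsDomain R]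
    {n : ℕ} (a : Fin n → ℕ) :
    (of fun j l : Fin n => ((a l).descFactorial j : R)).det =
      (vandermonde fun l => (a l : R)).det := by
  rw [det_eval_matrixOfPolynomials_eq_det_vandermonde _ (fun j => descPochhammer R j)
      (fun j => descPochhammer_natDegree R j) (fun j => monic_descPochhammer R j),
    ← det_transpose]
  simp only [transpose, of_apply, descPochhammer_eval_eq_descFactorial]

def factorialProd (a r : ℕ) : ℕ := ∏ l ∈ range r, (a + l)!

lemma factorialProd_succ (a r : ℕ) : factorialProd a (r + 1) = factorialProd a r * (a + r)! :=
  prod_range_succ _ r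

lemma factorialProd_succ' (a r : ℕ) :
    factorialProd a (r + 1) = a ! * factorialProd (a + 1) r := by
  simp only [factorialProd, prod_range_succ', add_zero, mul_comm, add_assoc, add_comm 1]

lemma factorialProd_pos (a r : ℕ) : 0 < factorialProd a r :=
  prod_pos fun l _ => Nat.factorial_pos (a + l)

/-- The paper's `M_{n,k}`, with row and column indices starting at `0`. -/
def factorialRatioMatrix (n k : ℕ) : Matrix (Fin n) (Fin n) ℚ :=
  of fun j l : Fin n => ((k + n - (l + 1))! / (k + n - (l + 1) + j)! : ℚ)

lemma factorialRatioMatrix_submatrix_rev (m k : ℕ) :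
    (factorialRatioMatrix (m + 1) k).submatrix Fin.rev Fin.rev =
      of fun j l : Fin (m + 1) =>
        ((k + l)! / (k + m + l)! : ℚ) * ((k + m + l).descFactorial j : ℚ) := by
  ext j l
  have hj : (j : ℕ) ≤ m := Nat.le_of_lt_succ j.isLt
  have hl : (l : ℕ) ≤ m := Nat.le_of_lt_succ l.isLt
  have hdesc : ((k + m + l - j)! : ℚ) * (k + m + l).descFactorial j = (k + m + l)! := by
    exact_mod_cast Nat.factorial_mul_descFactorial (by omega)
  simp only [factorialRatioMatrix, submatrix_apply, of_apply, Fin.val_rev]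
  rw [show k + (m + 1) - (m + 1 - (l + 1) + 1) = k + l by omega,
    show k + l + (m + 1 - (j + 1)) = k + m + l - j by omega, ← hdesc]
  have : ((k + m + l - j)! : ℚ) ≠ 0 := by positivity
  have : ((k + m + l).descFactorial j : ℚ) ≠ 0 := by
    exact_mod_cast (Nat.descFactorial_pos.mpr (by omega)).ne'
  field_simp

theorem det_factorialRatioMatrix_succ (m k : ℕ) :
    (factorialRatioMatrix (m + 1) k).det =
      (m.superFactorial * factorialProd k (m + 1) / factorialProd (k + m) (m + 1) : ℚ) := by
  have hvandermonde : (vandermonde fun l : Fin (m + 1) => ((k + m + l : ℕ) : ℚ)).det =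
      m.superFactorial := by
    simpa [add_comm] using
      (det_vandermonde_add (fun l : Fin (m + 1) => (l : ℚ)) (k + m : ℚ)).trans
        (det_vandermonde_id_eq_superFactorial m)
  calc (factorialRatioMatrix (m + 1) k).det
      = ((factorialRatioMatrix (m + 1) k).submatrix Fin.rev Fin.rev).det :=
        (det_submatrix_equiv_self Fin.revPerm _).symm
    _ = (∏ l : Fin (m + 1), ((k + l)! / (k + m + l)! : ℚ)) * m.superFactorial := by
        rw [factorialRatioMatrix_submatrix_rev, ← hvandermonde,
          ← det_descFactorial_eq_det_vandermonde]
        exact det_mul_row _ (of fun j l : Fin (m + 1) => ((k + m + l).descFactorial j : ℚ))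
    _ = _ := by
        rw [Fin.prod_univ_eq_prod_range (fun l => ((k + l)! / (k + m + l)! : ℚ)),
          prod_div_distrib]
        simp only [factorialProd, Nat.cast_prod]
        ring

theorem det_factorialRatioMatrix_ne_zero (n k : ℕ) : (factorialRatioMatrix n k).det ≠ 0 := by
  cases n with
  | zero => simp
  | succ m =>
    rw [det_factorialRatioMatrix_succ]
    have := factorialProd_pos k (m + 1)
    have := factorialProd_pos (k + m) (m + 1)
    have : 0 < m.superFactorial :=
      Nat.prod_range_succ_factorial m ▸ prod_pos fun l _ => l.factorial_pos
    positivity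

theorem det_factorialRatioMatrix_eq (n k : ℕ) (hn : 2 ≤ n) :
    (factorialRatioMatrix n k).det =
      ((n - 1)! * k ! * (k + 1)! : ℚ) / ((k + n - 1)! * (k + n)!) *
        (factorialRatioMatrix (n - 1) (k + 2)).det := by
  obtain ⟨m, rfl⟩ : ∃ m, n = m + 2 := ⟨n - 2, by omega⟩
  rw [show m + 2 - 1 = m + 1 by omega, show k + (m + 2) - 1 = k + m + 1 by omega,
    show k + (m + 2) = k + m + 2 by omega, det_factorialRatioMatrix_succ,
    det_factorialRatioMatrix_succ, Nat.superFactorial_succ]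
  have hnum : factorialProd k (m + 2) = k ! * (k + 1)! * factorialProd (k + 2) m := by
    rw [factorialProd_succ', factorialProd_succ', mul_assoc]
  have hnum' : factorialProd (k + 2) (m + 1) = factorialProd (k + 2) m * (k + m + 2)! := by
    rw [factorialProd_succ, add_right_comm]
  have hden : factorialProd (k + (m + 1)) (m + 2) =
      (k + m + 1)! * factorialProd (k + 2 + m) (m + 1) := by
    rw [factorialProd_succ', ← add_assoc, show k + m + 1 + 1 = k + 2 + m by omega]
  rw [hnum, hnum', hden]
  have := factorialProd_pos (k + 2 + m) (m + 1)
  push_cast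
  field_simp

theorem stmt_1_general (n k : ℕ) :
    (2 ≤ n →
      (Matrix.of fun j l : Fin n =>
          ((Nat.factorial (k + n - ((l : ℕ) + 1)) : ℚ) /
            (Nat.factorial (k + n - ((l : ℕ) + 1) + (j : ℕ)) : ℚ))).det
        = ((Nat.factorial (n - 1) : ℚ) * (Nat.factorial k : ℚ) * (Nat.factorial (k + 1) : ℚ)) /
            ((Nat.factorial (k + n - 1) : ℚ) * (Nat.factorial (k + n) : ℚ)) *
          (Matrix.of fun j l : Fin (n - 1) =>
            ((Nat.factorial ((k + 2) + (n - 1) - ((l : ℕ) + 1)) : ℚ) /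
              (Nat.factorial ((k + 2) + (n - 1) - ((l : ℕ) + 1) + (j : ℕ)) : ℚ))).det) ∧
    (Matrix.of fun j l : Fin n =>
        ((Nat.factorial (k + n - ((l : ℕ) + 1)) : ℚ) /
          (Nat.factorial (k + n - ((l : ℕ) + 1) + (j : ℕ)) : ℚ))).det ≠ 0 :=
  ⟨det_factorialRatioMatrix_eq n k, det_factorialRatioMatrix_ne_zero n k⟩

/-- For positive integers `n` and `k`, the `n × n` matrix `M_{n,k}` with entries
`(M_{n,k})_{j,l} = (k+n-l)!/(k+n-l+j-1)!` (for `1 ≤ j, l ≤ n`) satisfies, for `n ≥ 2`,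
the recurrence
`det M_{n,k} = ((n-1)! · k! · (k+1)!)/((k+n-1)! · (k+n)!) · det M_{n-1,k+2}`.
Consequently `det M_{n,k} ≠ 0` for all `n, k`. -/
theorem stmt_1 (n k : ℕ) (hn : 1 ≤ n) (hk : 1 ≤ k) :
    (2 ≤ n →
      (Matrix.of fun j l : Fin n =>
          ((Nat.factorial (k + n - ((l : ℕ) + 1)) : ℚ) /
            (Nat.factorial (k + n - ((l : ℕ) + 1) + (j : ℕ)) : ℚ))).det
        = ((Nat.factorial (n - 1) : ℚ) * (Nat.factorial k : ℚ) * (Nat.factorial (k + 1) : ℚ)) /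
            ((Nat.factorial (k + n - 1) : ℚ) * (Nat.factorial (k + n) : ℚ)) *
          (Matrix.of fun j l : Fin (n - 1) =>
            ((Nat.factorial ((k + 2) + (n - 1) - ((l : ℕ) + 1)) : ℚ) /
              (Nat.factorial ((k + 2) + (n - 1) - ((l : ℕ) + 1) + (j : ℕ)) : ℚ))).det) ∧
    (Matrix.of fun j l : Fin n =>
        ((Nat.factorial (k + n - ((l : ℕ) + 1)) : ℚ) /
          (Nat.factorial (k + n - ((l : ℕ) + 1) + (j : ℕ)) : ℚ))).det ≠ 0 :=
  stmt_1_general n k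
end

section
/- Let T be a linear operator on a vector space X over a field. Then T has no non-trivial finite dimensional invariant subspaces if and only if p(T) is injective for every non-zero polynomial p. -/
open Polynomial

private lemma aeval_restrict_coe {k : Type*} [Field k] {X : Type*} [AddCommGroup X] [Module k X]
    (T : Module.End k X) (E : Submodule k X) (hinv : ∀ x ∈ E, T x ∈ E)
    (q : Polynomial k) (v : E) :
    (Polynomial.aeval T q) (v : X) = ((Polynomial.aeval (T.restrict hinv) q) v : X) := by
  have hpow : ∀ (n : ℕ) (w : E), ((T ^ n) (w : X) : X) = (((T.restrict hinv ^ n) w : E) : X) := by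
    intro n
    induction n with
    | zero => intro w; simp
    | succ n ih =>
      intro w
      rw [pow_succ', pow_succ']
      simp only [Module.End.mul_apply]
      rw [ih w, LinearMap.restrict_coe_apply]
  rw [Polynomial.aeval_eq_sum_range (p := q) T,
    Polynomial.aeval_eq_sum_range (p := q) (T.restrict hinv)]
  simp only [LinearMap.sum_apply, LinearMap.smul_apply]
  push_cast [hpow]
  rfl

/-- Let `T` be a linear operator on a vector space `X` over a field. Then `T` has no
non-trivial finite dimensional invariant subspaces if and only if `p(T)` is injective
for every non-zero polynomial `p`. -/
theorem stmt_2 (k : Type*) [Field k] (X : Type*) [AddCommGroup X] [Module k X]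
    (T : Module.End k X) :
    (¬ ∃ E : Submodule k X, E ≠ ⊥ ∧ FiniteDimensional k E ∧ ∀ x ∈ E, T x ∈ E) ↔
      ∀ p : Polynomial k, p ≠ 0 → Function.Injective ⇑(Polynomial.aeval T p) := by
  constructor
  · intro hno p hp
    by_contra hni
    obtain ⟨a, b, hab, hne⟩ := Function.not_injective_iff.mp hni
    set x := a - b with hx
    have hx0 : x ≠ 0 := sub_ne_zero.mpr hne
    have hpx : (Polynomial.aeval T p) x = 0 := by
      rw [hx, map_sub, hab, sub_self]
    set d := p.natDegree with hd
    have hsum : ∑ i ∈ Finset.range (d + 1), p.coeff i • (T ^ i) x = 0 := by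
      have := Polynomial.aeval_eq_sum_range (p := p) T
      rw [this] at hpx
      simpa [LinearMap.sum_apply, LinearMap.smul_apply] using hpx
    have hcd : p.coeff d ≠ 0 := by
      rw [hd]; exact Polynomial.leadingCoeff_ne_zero.mpr hp
    rcases Nat.eq_zero_or_pos d with hd0 | hdpos
    · -- constant polynomial case
      have h1 : p.coeff d • x = 0 := by
        rw [hd0] at hsum ⊢
        simpa using hsum
      rcases smul_eq_zero.mp h1 with h | h
      · exact hcd h
      · exact hx0 h
    · -- nonconstant case: build invariant subspace
      set E : Submodule k X := Submodule.span k (Set.range fun i : Fin d => (T ^ (i : ℕ)) x)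
        with hE
      have hgen : ∀ i : ℕ, i < d → (T ^ i) x ∈ E := by
        intro i hi
        exact Submodule.subset_span ⟨⟨i, hi⟩, rfl⟩
      have hxE : x ∈ E := by
        have := hgen 0 hdpos
        simpa using this
      have htop : (T ^ d) x ∈ E := by
        rw [Finset.sum_range_succ] at hsum
        have : p.coeff d • (T ^ d) x = -∑ i ∈ Finset.range d, p.coeff i • (T ^ i) x := by
          linear_combination (norm := module) hsum
        have h2 : (T ^ d) x = (p.coeff d)⁻¹ • -∑ i ∈ Finset.range d, p.coeff i • (T ^ i) x := by
          rw [← this, smul_smul, inv_mul_cancel₀ hcd, one_smul]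
        rw [h2]
        refine Submodule.smul_mem _ _ (Submodule.neg_mem _ (Submodule.sum_mem _ ?_))
        intro i hi
        exact Submodule.smul_mem _ _ (hgen i (Finset.mem_range.mp hi))
      have hgen' : ∀ i : ℕ, i ≤ d → (T ^ i) x ∈ E := by
        intro i hi
        rcases lt_or_eq_of_le hi with h | h
        · exact hgen i h
        · exact h ▸ htop
      have hTinv : ∀ y ∈ E, T y ∈ E := by
        intro y hy
        induction hy using Submodule.span_induction with
        | mem y hy =>
          obtain ⟨i, rfl⟩ := hy
          have : T ((T ^ (i : ℕ)) x) = (T ^ ((i : ℕ) + 1)) x := by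
            rw [pow_succ']; rfl
          rw [this]
          exact hgen' _ (by omega)
        | zero => simp
        | add y z _ _ hy hz => rw [map_add]; exact Submodule.add_mem _ hy hz
        | smul c y _ hy => rw [map_smul]; exact Submodule.smul_mem _ _ hy
      exact hno ⟨E, fun h => hx0 (h ▸ hxE : x ∈ (⊥ : Submodule k X)),
        FiniteDimensional.span_of_finite k (Set.finite_range _), hTinv⟩
  · rintro hinj ⟨E, hE, hfd, hinv⟩
    set S := T.restrict hinv with hS
    have hp0 : S.charpoly ≠ 0 := (S.charpoly_monic).ne_zero
    obtain ⟨x, hxE, hx0⟩ := Submodule.ne_bot_iff E |>.mp hE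
    have hzero : (Polynomial.aeval T S.charpoly) x = 0 := by
      have := aeval_restrict_coe T E hinv S.charpoly ⟨x, hxE⟩
      rw [this, LinearMap.aeval_self_charpoly]
      simp
    have := hinj S.charpoly hp0 (a₁ := x) (a₂ := 0) (by simpa using hzero)
    exact hx0 this
end

section
/- Let T be a linear operator on a vector space X with no non-trivial finite dimensional invariant subspaces, and let x ∈ X be nonzero. Then the set F(T,x) = { y ∈ X : there exist a nonzero polynomial p and a polynomial q with p(T)y = q(T)x } is a linear subspace of X satisfying T(F(T,x)) ⊆ F(T,x) and T⁻¹(F(T,x)) ⊆ F(T,x). -/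
open Polynomial

namespace Module.End

variable {R M : Type*} [CommRing R] [AddCommGroup M] [Module R M]

lemma aeval_mul_apply (T : Module.End R M) (p q : R[X]) (v : M) :
    aeval T (p * q) v = aeval T p (aeval T q v) := by
  rw [map_mul, Module.End.mul_apply]

lemma aeval_apply_comm (T : Module.End R M) (p : R[X]) (v : M) :
    aeval T p (T v) = T (aeval T p v) := by
  simpa using congr($((Commute.all p X).map (aeval T)) v)

variable [IsDomain R]

/-- The paper's `F(T, x)`: the vectors `(q/p)(T) x`, with `q/p` ranging over rational functions. -/
def rationalSpan (T : Module.End R M) (x : M) : Submodule R M where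
  carrier := {y | ∃ p q : R[X], p ≠ 0 ∧ aeval T p y = aeval T q x}
  zero_mem' := ⟨1, 0, one_ne_zero, by simp⟩
  add_mem' := by
    rintro a b ⟨p₁, q₁, hp₁, h₁⟩ ⟨p₂, q₂, hp₂, h₂⟩
    -- common denominator: `q₁/p₁ + q₂/p₂ = (p₂ q₁ + p₁ q₂)/(p₁ p₂)`
    refine ⟨p₁ * p₂, p₂ * q₁ + p₁ * q₂, mul_ne_zero hp₁ hp₂, ?_⟩
    have e₁ : aeval T (p₁ * p₂) a = aeval T (p₂ * q₁) x := by
      rw [mul_comm, aeval_mul_apply, h₁, aeval_mul_apply]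
    have e₂ : aeval T (p₁ * p₂) b = aeval T (p₁ * q₂) x := by
      rw [aeval_mul_apply, h₂, aeval_mul_apply]
    rw [map_add, e₁, e₂, map_add, LinearMap.add_apply]
  smul_mem' := by
    rintro c y ⟨p, q, hp, h⟩
    exact ⟨p, c • q, hp, by rw [map_smul, h, map_smul, LinearMap.smul_apply]⟩

variable {T : Module.End R M} {x y : M}

lemma apply_mem_rationalSpan (hy : y ∈ rationalSpan T x) : T y ∈ rationalSpan T x := by
  obtain ⟨p, q, hp, h⟩ := hy
  exact ⟨p, X * q, hp, by rw [aeval_apply_comm, h, aeval_mul_apply, aeval_X]⟩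

lemma mem_rationalSpan_of_apply_mem (hy : T y ∈ rationalSpan T x) : y ∈ rationalSpan T x := by
  obtain ⟨p, q, hp, h⟩ := hy
  exact ⟨p * X, q, mul_ne_zero hp X_ne_zero, by rw [aeval_mul_apply, aeval_X, h]⟩

end Module.End

open Module.End in
theorem stmt_4_general (k : Type*) [Field k] (X : Type*) [AddCommGroup X] [Module k X]
    (T : Module.End k X)
    (x : X) :
    ∃ F : Submodule k X,
      (F : Set X) = {y : X | ∃ p q : Polynomial k, p ≠ 0 ∧
          Polynomial.aeval T p y = Polynomial.aeval T q x} ∧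
      (∀ y ∈ F, T y ∈ F) ∧ (∀ y : X, T y ∈ F → y ∈ F) :=
  ⟨rationalSpan T x, rfl, fun _ ↦ apply_mem_rationalSpan, fun _ ↦ mem_rationalSpan_of_apply_mem⟩

/-- Let `T` be a linear operator on a vector space `X` with no non-trivial finite
dimensional invariant subspaces and let `x ∈ X` be nonzero. Then the set
`F(T,x) = {y : ∃ p ≠ 0, q, p(T)y = q(T)x}` is a linear subspace of `X` which is
invariant and biinvariant: `T(F(T,x)) ⊆ F(T,x)` and `T⁻¹(F(T,x)) ⊆ F(T,x)`. -/
theorem stmt_4 (k : Type*) [Field k] (X : Type*) [AddCommGroup X] [Module k X]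
    (T : Module.End k X)
    (hT : ¬ ∃ E : Submodule k X, E ≠ ⊥ ∧ FiniteDimensional k E ∧ ∀ x ∈ E, T x ∈ E)
    (x : X) (hx : x ≠ 0) :
    ∃ F : Submodule k X,
      (F : Set X) = {y : X | ∃ p q : Polynomial k, p ≠ 0 ∧
          Polynomial.aeval T p y = Polynomial.aeval T q x} ∧
      (∀ y ∈ F, T y ∈ F) ∧ (∀ y : X, T y ∈ F → y ∈ F) :=
  stmt_4_general k X T x
end

section
/- Let T be a linear operator on a vector space X with no non-trivial finite dimensional invariant subspaces and let x ∈ X be nonzero. For y ∈ F(T,x), if p(T)y = q(T)x and p₁(T)y = q₁(T)x with p, p₁ nonzero polynomials, then q/p = q₁/p₁ as rational functions. Moreover the resulting map S_x : F(T,x) → k(z), S_x(y) = q/p, is linear and satisfies S_x(Ty)(z) = z · S_x(y)(z). -/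
open Polynomial


section
variable {k : Type*} [Field k] {X : Type*} [AddCommGroup X] [Module k X] (T : Module.End k X)

lemma aux_comp (r s : k[X]) (w : X) :
    aeval T (r * s) w = aeval T r (aeval T s w) := by
  rw [map_mul, Module.End.mul_apply]

lemma aux_comm (r : k[X]) (w : X) : aeval T r (T w) = T (aeval T r w) := by
  have h : aeval T (r * Polynomial.X) w = aeval T (Polynomial.X * r) w := by rw [mul_comm]
  simpa [map_mul, Module.End.mul_apply] using h

lemma aux_inv
    (hT : ¬ ∃ E : Submodule k X, E ≠ ⊥ ∧ FiniteDimensional k E ∧ ∀ x ∈ E, T x ∈ E)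
    {v : X} (hv : v ≠ 0) {p : k[X]} (hp : p ≠ 0) : aeval T p v ≠ 0 := by
  intro hpv
  set n := p.natDegree with hn
  have hn1 : 1 ≤ n := by
    rcases Nat.eq_zero_or_pos n with h0 | h
    · exfalso
      have hpC : p = C (p.coeff 0) :=
        Polynomial.eq_C_of_natDegree_eq_zero (hn.symm.trans h0)
      rw [hpC] at hpv
      simp only [aeval_C, Module.algebraMap_end_apply, smul_eq_zero] at hpv
      rcases hpv with h' | h'
      · exact hp (by rw [hpC, h', map_zero])
      · exact hv h'
    · exact h
  set E : Submodule k X := Submodule.span k (Set.range fun i : Fin n => (T ^ (i : ℕ)) v) with hE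
  have hgen : ∀ i : Fin n, (T ^ (i : ℕ)) v ∈ E := fun i => Submodule.subset_span ⟨i, rfl⟩
  have hcn : p.coeff n ≠ 0 := by
    rw [hn, Polynomial.coeff_natDegree]
    exact Polynomial.leadingCoeff_ne_zero.mpr hp
  have hsum : p.coeff n • (T ^ n) v
      = - ∑ j ∈ Finset.range n, p.coeff j • (T ^ j) v := by
    have h := Polynomial.aeval_eq_sum_range (R := k) (p := p) T
    have h2 := congrArg (fun f : Module.End k X => f v) h
    simp only [hpv, LinearMap.sum_apply, LinearMap.smul_apply] at h2
    rw [Finset.sum_range_succ] at h2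
    have h3 : p.coeff n • (T ^ n) v + ∑ j ∈ Finset.range n, p.coeff j • (T ^ j) v = 0 := by
      rw [add_comm]; exact h2.symm
    exact eq_neg_of_add_eq_zero_left h3
  have hmem : ∀ m : ℕ, (T ^ m) v ∈ E := by
    intro m
    induction m using Nat.strong_induction_on with
    | _ m ih =>
      by_cases hm : m < n
      · exact hgen ⟨m, hm⟩
      · push_neg at hm
        have hTn : (T ^ m) v = (p.coeff n)⁻¹ • (T ^ (m - n)) (p.coeff n • (T ^ n) v) := by
          rw [map_smul, smul_smul, inv_mul_cancel₀ hcn, one_smul, ← Module.End.mul_apply,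
            ← pow_add, Nat.sub_add_cancel hm]
        rw [hTn, hsum, map_neg, map_sum]
        refine Submodule.smul_mem _ _ (Submodule.neg_mem _ (Submodule.sum_mem _ ?_))
        intro j hj
        rw [Finset.mem_range] at hj
        rw [map_smul]
        refine Submodule.smul_mem _ _ ?_
        have h3 : (T ^ (m - n)) ((T ^ j) v) = (T ^ (m - n + j)) v := by
          rw [pow_add, Module.End.mul_apply]
        rw [h3]
        exact ih _ (by omega)
  apply hT
  refine ⟨E, ?_, ?_, ?_⟩
  · intro hbot
    apply hv
    have hvE : v ∈ E := by simpa using hmem 0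
    rw [hbot] at hvE
    simpa using hvE
  · exact FiniteDimensional.span_of_finite k (Set.finite_range _)
  · intro w hw
    refine Submodule.span_induction ?_ (by simp) (fun a b _ _ ha hb => by
      simpa [map_add] using Submodule.add_mem E ha hb)
      (fun c a _ ha => by simpa [map_smul] using Submodule.smul_mem E c ha) hw
    rintro w ⟨i, rfl⟩
    have h4 : T ((T ^ (i : ℕ)) v) = (T ^ ((i : ℕ) + 1)) v := by
      rw [pow_succ', Module.End.mul_apply]
    rw [h4]
    exact hmem _

lemma aux_cancel
    (hT : ¬ ∃ E : Submodule k X, E ≠ ⊥ ∧ FiniteDimensional k E ∧ ∀ x ∈ E, T x ∈ E)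
    {x : X} (hx : x ≠ 0) {r s : k[X]} (h : aeval T r x = aeval T s x) : r = s := by
  by_contra hne
  exact aux_inv T hT hx (sub_ne_zero.mpr hne)
    (by rw [map_sub, LinearMap.sub_apply, h, sub_self])

end


/-- Let `T` be a linear operator on a vector space `X` with no non-trivial finite
dimensional invariant subspaces and let `x ∈ X` be nonzero. For `y ∈ F(T,x)`, if
`p(T)y = q(T)x` and `p₁(T)y = q₁(T)x` with `p, p₁` nonzero, then `q/p = q₁/p₁` as
rational functions; moreover the resulting map `S_x y = q/p` is linear and satisfies
`S_x(Ty) = z · S_x(y)`. -/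
theorem stmt_5 (k : Type*) [Field k] (X : Type*) [AddCommGroup X] [Module k X]
    (T : Module.End k X)
    (hT : ¬ ∃ E : Submodule k X, E ≠ ⊥ ∧ FiniteDimensional k E ∧ ∀ x ∈ E, T x ∈ E)
    (x : X) (hx : x ≠ 0) :
    -- well-definedness of `S_x y = q/p`
    (∀ (y : X) (p q p₁ q₁ : Polynomial k), p ≠ 0 → p₁ ≠ 0 →
        aeval T p y = aeval T q x → aeval T p₁ y = aeval T q₁ x →
        algebraMap (Polynomial k) (RatFunc k) q / algebraMap (Polynomial k) (RatFunc k) p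
          = algebraMap (Polynomial k) (RatFunc k) q₁ / algebraMap (Polynomial k) (RatFunc k) p₁) ∧
    -- linearity of `S_x`
    (∀ (y u : X) (a b : k) (p q p' q' P Q : Polynomial k), p ≠ 0 → p' ≠ 0 → P ≠ 0 →
        aeval T p y = aeval T q x → aeval T p' u = aeval T q' x →
        aeval T P (a • y + b • u) = aeval T Q x →
        algebraMap (Polynomial k) (RatFunc k) Q / algebraMap (Polynomial k) (RatFunc k) P
          = algebraMap k (RatFunc k) a *
              (algebraMap (Polynomial k) (RatFunc k) q / algebraMap (Polynomial k) (RatFunc k) p)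
            + algebraMap k (RatFunc k) b *
              (algebraMap (Polynomial k) (RatFunc k) q' /
                algebraMap (Polynomial k) (RatFunc k) p')) ∧
    -- `S_x (T y) = z · S_x y`
    (∀ (y : X) (p q P Q : Polynomial k), p ≠ 0 → P ≠ 0 →
        aeval T p y = aeval T q x → aeval T P (T y) = aeval T Q x →
        algebraMap (Polynomial k) (RatFunc k) Q / algebraMap (Polynomial k) (RatFunc k) P
          = RatFunc.X *
            (algebraMap (Polynomial k) (RatFunc k) q /
              algebraMap (Polynomial k) (RatFunc k) p)) := by
  have amap_ne : ∀ {r : Polynomial k}, r ≠ 0 → algebraMap (Polynomial k) (RatFunc k) r ≠ 0 :=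
    fun hr => by
      simpa using (map_ne_zero_iff _ (RatFunc.algebraMap_injective k)).mpr hr
  refine ⟨?_, ?_, ?_⟩
  · intro y p q p₁ q₁ hp hp₁ h h₁
    have key : aeval T (p₁ * q) x = aeval T (p * q₁) x := by
      rw [aux_comp, aux_comp, ← h, ← h₁, ← aux_comp, ← aux_comp, mul_comm]
    have hpoly : p₁ * q = p * q₁ := aux_cancel T hT hx key
    rw [div_eq_div_iff (amap_ne hp) (amap_ne hp₁), ← map_mul, ← map_mul]
    congr 1
    linear_combination hpoly
  · intro y u a b p q p' q' P Q hp hp' hP hy hu hyu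
    have key : aeval T (p * p' * Q) x
        = aeval T (C a * (P * (p' * q)) + C b * (P * (p * q'))) x := by
      rw [aux_comp, ← hyu, ← aux_comp, map_add, map_smul, map_smul]
      have h1 : aeval T (p * p' * P) y = aeval T (P * (p' * q)) x := by
        rw [show p * p' * P = p' * P * p by ring, aux_comp, hy, ← aux_comp,
          show p' * P * q = P * (p' * q) by ring]
      have h2 : aeval T (p * p' * P) u = aeval T (P * (p * q')) x := by
        rw [show p * p' * P = p * P * p' by ring, aux_comp, hu, ← aux_comp,
          show p * P * q' = P * (p * q') by ring]
      rw [h1, h2, map_add, map_mul, map_mul]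
      simp [LinearMap.add_apply, Module.End.mul_apply, aeval_C, Module.algebraMap_end_apply]
    have hpoly : p * p' * Q = C a * (P * (p' * q)) + C b * (P * (p * q')) :=
      aux_cancel T hT hx key
    have hmap := congrArg (algebraMap (Polynomial k) (RatFunc k)) hpoly
    simp only [map_add, map_mul, RatFunc.algebraMap_C] at hmap
    have hCa : algebraMap k (RatFunc k) a = algebraMap (Polynomial k) (RatFunc k) (C a) := by
      rw [IsScalarTower.algebraMap_apply k (Polynomial k) (RatFunc k), Polynomial.algebraMap_eq]
    have hCb : algebraMap k (RatFunc k) b = algebraMap (Polynomial k) (RatFunc k) (C b) := by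
      rw [IsScalarTower.algebraMap_apply k (Polynomial k) (RatFunc k), Polynomial.algebraMap_eq]
    rw [RatFunc.algebraMap_C] at hCa hCb
    rw [hCa, hCb]
    field_simp [amap_ne hp, amap_ne hp', amap_ne hP]
    linear_combination hmap
  · intro y p q P Q hp hP hy hTy
    have key : aeval T (p * Q) x = aeval T (P * Polynomial.X * q) x := by
      rw [aux_comp, ← hTy, ← aux_comp, show p * P = P * p by ring, aux_comp,
        aux_comm, hy, show P * Polynomial.X * q = P * (Polynomial.X * q) by ring,
        aux_comp, aux_comp]
      simp
    have hpoly : p * Q = P * Polynomial.X * q := aux_cancel T hT hx key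
    have hmap := congrArg (algebraMap (Polynomial k) (RatFunc k)) hpoly
    simp only [map_mul, RatFunc.algebraMap_X] at hmap
    field_simp [amap_ne hp, amap_ne hP]
    linear_combination hmap
end

section
/- Let T be a linear operator on a vector space X with no non-trivial finite dimensional invariant subspaces, and let L be a finite dimensional subspace of X. Then there exists n₀ ∈ ℕ such that for every polynomial p with deg p ≥ n₀, p(T)(L) ∩ L = {0}. -/
/-!
Via `T`, the space becomes a `k[X]`-module, and it is torsion-free: the cyclic submodule of a
vector killed by `p ≠ 0` is a quotient of `k[X] ⧸ (p)`, so it would be a nonzero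
finite-dimensional invariant subspace. The `k[X]`-span of `L` is then finitely generated
and torsion-free, hence free over the PID `k[X]`. In a basis, the coordinates of the vectors of
the finite-dimensional `L` have degree at most some `N`, whereas `p • u` has a coordinate of
degree at least `deg p` as soon as `u ≠ 0`. Hence `p(T) u ∈ L` with `0 ≠ u ∈ L` forces
`deg p ≤ N`.
-/

open Polynomial

namespace Module.Basis

variable {k M ι : Type*} [Field k] [AddCommGroup M] [Module k[X] M] [Module k M]
  [IsScalarTower k k[X] M] (b : Basis ι k[X] M)

noncomputable def degreeLE (n : ℕ) : Submodule k M :=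
  ⨅ i, (Polynomial.degreeLE k n).comap ((b.coord i).restrictScalars k)

theorem mem_degreeLE {n : ℕ} {m : M} : m ∈ b.degreeLE n ↔ ∀ i, (b.repr m i).natDegree ≤ n := by
  simp [degreeLE, Polynomial.mem_degreeLE, natDegree_le_iff_degree_le]

theorem degreeLE_mono : Monotone b.degreeLE := fun _ _ hnn' _ hm =>
  b.mem_degreeLE.2 fun i => (b.mem_degreeLE.1 hm i).trans hnn'

theorem exists_mem_degreeLE (m : M) : ∃ n, m ∈ b.degreeLE n :=
  ⟨(b.repr m).support.sup fun i => (b.repr m i).natDegree, b.mem_degreeLE.2 fun i => by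
    by_cases hi : i ∈ (b.repr m).support
    · exact Finset.le_sup (f := fun i => (b.repr m i).natDegree) hi
    · simp [Finsupp.notMem_support_iff.1 hi]⟩

theorem exists_le_degreeLE {S : Submodule k M} (hS : S.FG) : ∃ n, S ≤ b.degreeLE n := by
  obtain ⟨s, rfl⟩ := hS
  choose N hN using b.exists_mem_degreeLE
  exact ⟨s.sup N, Submodule.span_le.2 fun m hm => b.degreeLE_mono (Finset.le_sup hm) (hN m)⟩

theorem natDegree_le_of_smul_mem_degreeLE {n : ℕ} {p : k[X]} {m : M} (hm : m ≠ 0)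
    (h : p • m ∈ b.degreeLE n) : p.natDegree ≤ n := by
  obtain ⟨i, hi⟩ : ∃ i, b.repr m i ≠ 0 := by
    by_contra! h0
    exact hm (b.repr.map_eq_zero_iff.1 (Finsupp.ext h0))
  have := b.mem_degreeLE.1 h i
  rw [map_smul, Finsupp.smul_apply, smul_eq_mul] at this
  rcases eq_or_ne p 0 with rfl | hp
  · simp
  · rw [natDegree_mul hp hi] at this
    omega

end Module.Basis

section

variable {k V : Type*} [Field k] [AddCommGroup V] [Module k[X] V] [Module k V]
  [IsScalarTower k k[X] V]

theorem finiteDimensional_span_singleton_of_smul_eq_zero {p : k[X]} (hp : p ≠ 0) {m : V}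
    (hm : p • m = 0) : FiniteDimensional k ((Submodule.span k[X] {m}).restrictScalars k) := by
  set q := p * C p.leadingCoeff⁻¹
  have hq : q ∈ (LinearMap.toSpanSingleton k[X] V m).ker := by
    simp [q, mul_comm p, mul_smul, hm]
  have : Module.Finite k (k[X] ⧸ Ideal.span {q}) :=
    (monic_mul_leadingCoeff_inv hp).finite_quotient
  let f := (Ideal.span {q}).liftQ (LinearMap.toSpanSingleton k[X] V m)
    ((Submodule.span_singleton_le_iff_mem _ _).2 hq)
  have hf : LinearMap.range (f.restrictScalars k) =
      (Submodule.span k[X] {m}).restrictScalars k := by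
    rw [LinearMap.range_restrictScalars, Submodule.range_liftQ,
      LinearMap.span_singleton_eq_range]
  rw [← hf]
  infer_instance

theorem exists_eq_zero_of_smul_mem_of_le_natDegree [Module.IsTorsionFree k[X] V]
    (L : Submodule k V) [FiniteDimensional k L] :
    ∃ n₀ : ℕ, ∀ p : k[X], n₀ ≤ p.natDegree → ∀ u ∈ L, p • u ∈ L → u = 0 := by
  obtain ⟨M, hMfg, hLM⟩ : ∃ M : Submodule k[X] V, M.FG ∧ L ≤ M.restrictScalars k := by
    obtain ⟨s, hs⟩ := (Module.Finite.iff_fg (N := L)).1 inferInstance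
    exact ⟨_, Submodule.fg_span s.finite_toSet, hs ▸ Submodule.span_le_restrictScalars k k[X] _⟩
  have : Module.Finite k[X] M := Module.Finite.iff_fg.2 hMfg
  let b := Module.Free.chooseBasis k[X] M
  have hLfg : (L.comap (M.restrictScalars k).subtype : Submodule k M).FG :=
    Module.Finite.iff_fg.1 (Submodule.comapSubtypeEquivOfLe hLM).symm.finiteDimensional
  obtain ⟨n, hn⟩ := b.exists_le_degreeLE hLfg
  refine ⟨n + 1, fun p hp u hu hpu => ?_⟩
  by_contra hu0
  have := b.natDegree_le_of_smul_mem_degreeLE (m := ⟨u, hLM hu⟩) (fun h => hu0 congr($h.1))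
    (hn (show p • u ∈ L from hpu))
  omega

end

theorem isTorsionFree_aeval_of_no_finiteDimensional_invariant {k V : Type*} [Field k]
    [AddCommGroup V] [Module k V] (T : Module.End k V)
    (hT : ¬ ∃ E : Submodule k V, E ≠ ⊥ ∧ FiniteDimensional k E ∧ ∀ x ∈ E, T x ∈ E) :
    Module.IsTorsionFree k[X] (Module.AEval' T) := by
  refine .of_smul_eq_zero fun p m hpm => or_iff_not_imp_left.2 fun hp => ?_
  by_contra hm
  have := finiteDimensional_span_singleton_of_smul_eq_zero hp hpm
  set C := (Submodule.span k[X] {m}).restrictScalars k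
  refine hT ⟨C.comap (Module.AEval'.of T).toLinearMap, ?_, ?_, fun x hx => ?_⟩
  · exact (Submodule.ne_bot_iff _).2 ⟨(Module.AEval'.of T).symm m,
      by simp [C, Submodule.mem_span_singleton_self], by simpa using hm⟩
  · rw [Submodule.comap_equiv_eq_map_symm]
    infer_instance
  · simpa [C, Module.AEval'.X_smul_of] using
      (Submodule.span k[X] {m}).smul_mem X (show Module.AEval'.of T x ∈ _ from hx)

/-- Let `T` be a linear operator on a vector space `X` with no non-trivial finite
dimensional invariant subspaces and let `L` be a finite dimensional subspace of `X`.
Then there exists `n₀ ∈ ℕ` such that `p(T)(L) ∩ L = {0}` for every polynomial `p`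
with `deg p ≥ n₀`. -/
theorem stmt_6 (k : Type*) [Field k] (X : Type*) [AddCommGroup X] [Module k X]
    (T : Module.End k X)
    (hT : ¬ ∃ E : Submodule k X, E ≠ ⊥ ∧ FiniteDimensional k E ∧ ∀ x ∈ E, T x ∈ E)
    (L : Submodule k X) (hL : FiniteDimensional k L) :
    ∃ n₀ : ℕ, ∀ p : Polynomial k, n₀ ≤ p.natDegree →
      Submodule.map (Polynomial.aeval T p) L ⊓ L = ⊥ := by
  have := isTorsionFree_aeval_of_no_finiteDimensional_invariant T hT
  obtain ⟨n₀, hn₀⟩ :=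
    exists_eq_zero_of_smul_mem_of_le_natDegree (L.map (Module.AEval'.of T).toLinearMap)
  refine ⟨n₀, fun p hp => (Submodule.eq_bot_iff _).2 ?_⟩
  rintro _ ⟨⟨u, hu, rfl⟩, hpu⟩
  have hu0 : Module.AEval'.of T u = 0 :=
    hn₀ p hp _ (Submodule.mem_map_of_mem hu) (Submodule.mem_map_of_mem hpu)
  simp [(Module.AEval'.of T).map_eq_zero_iff.1 hu0]
end

section
/- Let S be the backward shift on K^{2n} (S e₁ = 0, S e_k = e_{k-1} for 2 ≤ k ≤ 2n, where K is ℝ or ℂ). Then S and e^S − I are similar via an invertible upper triangular matrix; in particular there exists an invertible J with S = J⁻¹(e^S − I)J. -/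
/-!
Any matrix `N` that is strictly upper triangular with all superdiagonal entries equal to `1`
is conjugate to the shift `S`: `N^k` vanishes below its `k`-th superdiagonal and has ones on
it, so the matrix `J` with columns `N^(d-1) v, …, N v, v` for `v = e_last` is upper unitriangular,
and `J S = N J` because `N^d = 0`. The matrix `e^S - 1 = S + S^2/2 + ⋯` is such an `N`.
-/

open Finset

def truncExp (K : Type*) {A : Type*} [DivisionRing K] [Semiring A] [Module K A] (N : ℕ) (a : A) :
    A :=
  ∑ m ∈ range N, ((Nat.factorial m : K))⁻¹ • a ^ m

namespace Matrix

variable {R : Type*} {d : ℕ}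

def VanishesBelowSuperdiag [Zero R] (k : ℕ) (A : Matrix (Fin d) (Fin d) R) : Prop :=
  ∀ i j : Fin d, (j : ℕ) < i + k → A i j = 0

section Band

variable [Semiring R] {A B : Matrix (Fin d) (Fin d) R} {p q : ℕ}

theorem VanishesBelowSuperdiag.eq_zero (hA : A.VanishesBelowSuperdiag d) : A = 0 :=
  ext fun i j => hA i j (by omega)

theorem VanishesBelowSuperdiag.mul (hA : A.VanishesBelowSuperdiag p)
    (hB : B.VanishesBelowSuperdiag q) : (A * B).VanishesBelowSuperdiag (p + q) := by
  intro i j hij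
  refine (mul_apply ..).trans <| sum_eq_zero fun l _ => ?_
  by_cases hl : (l : ℕ) < i + p
  · rw [hA i l hl, zero_mul]
  · rw [hB l j (by omega), mul_zero]

theorem VanishesBelowSuperdiag.mul_apply_of_eq (hA : A.VanishesBelowSuperdiag p)
    (hB : B.VanishesBelowSuperdiag q) {i j : Fin d} (hij : (j : ℕ) = i + p + q) :
    (A * B) i j = A i ⟨i + p, by omega⟩ * B ⟨i + p, by omega⟩ j := by
  refine (mul_apply ..).trans <| sum_eq_single _ (fun l _ hl => ?_) (by simp)
  simp only [ne_eq, Fin.ext_iff] at hl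
  rcases Nat.lt_or_gt_of_ne hl with hl | hl
  · rw [hA i l hl, zero_mul]
  · rw [hB l j (by omega), mul_zero]

theorem VanishesBelowSuperdiag.pow (hA : A.VanishesBelowSuperdiag 1) :
    ∀ k : ℕ, (A ^ k).VanishesBelowSuperdiag k
  | 0 => fun i j hij => by rw [pow_zero, one_apply_ne (by omega)]
  | k + 1 => fun i j hij => by
    rw [pow_succ']
    exact hA.mul (hA.pow k) i j (by omega)

theorem VanishesBelowSuperdiag.pow_apply_of_eq (hA : A.VanishesBelowSuperdiag 1)
    (hA₁ : ∀ i j : Fin d, (j : ℕ) = i + 1 → A i j = 1) :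
    ∀ (k : ℕ) {i j : Fin d}, (j : ℕ) = i + k → (A ^ k) i j = 1
  | 0, i, j, hij => by rw [pow_zero, Fin.ext hij, one_apply_eq]
  | k + 1, i, j, hij => by
    rw [pow_succ', hA.mul_apply_of_eq (hA.pow k) (by omega), hA₁ _ _ rfl,
      hA.pow_apply_of_eq hA₁ k (by simp only; omega), one_mul]

end Band

def shift (R : Type*) [Zero R] [One R] (d : ℕ) : Matrix (Fin d) (Fin d) R :=
  of fun i j => if (j : ℕ) = i + 1 then 1 else 0

section Shift

variable [Semiring R]

theorem vanishesBelowSuperdiag_shift : (shift R d).VanishesBelowSuperdiag 1 :=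
  fun _ _ hij => if_neg (by omega)

theorem shift_apply_of_eq {i j : Fin d} (hij : (j : ℕ) = i + 1) : shift R d i j = 1 :=
  if_pos hij

theorem mul_shift_apply (A : Matrix (Fin d) (Fin d) R) (i j : Fin d) :
    (A * shift R d) i j = if h : 0 < (j : ℕ) then A i ⟨j - 1, by omega⟩ else 0 := by
  simp only [mul_apply, shift, of_apply, mul_ite, mul_one, mul_zero]
  split_ifs with hj
  · refine (sum_eq_single _ (fun l _ hl => if_neg fun h => hl (Fin.ext ?_)) (by simp)).trans
      (if_pos (by simp only; omega))
    simp only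
    omega
  · exact sum_eq_zero fun l _ => if_neg (by omega)

end Shift

def krylov [Semiring R] (N : Matrix (Fin d) (Fin d) R) (v : Fin d → R) :
    Matrix (Fin d) (Fin d) R :=
  of fun i j => (N ^ (d - 1 - j) *ᵥ v) i

section Krylov

variable [Semiring R] {N : Matrix (Fin d) (Fin d) R}

theorem mul_krylov_apply (v : Fin d → R) (i j : Fin d) :
    (N * krylov N v) i j = (N ^ (d - j) *ᵥ v) i := by
  have hj : d - j = d - 1 - j + 1 := by omega
  rw [hj, pow_succ', ← mulVec_mulVec]
  rfl

theorem krylov_mul_shift (hN : N ^ d = 0) (v : Fin d → R) :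
    krylov N v * shift R d = N * krylov N v := by
  ext i j
  rw [mul_shift_apply, mul_krylov_apply]
  split_ifs with hj
  · simp only [krylov, of_apply]
    rw [show d - 1 - (j - 1 : ℕ) = d - j by omega]
  · rw [show (j : ℕ) = 0 by omega, Nat.sub_zero, hN, zero_mulVec, Pi.zero_apply]

end Krylov

section Unitriangular

variable {e : ℕ} {N : Matrix (Fin (e + 1)) (Fin (e + 1)) R}

theorem krylov_single_last_apply [Semiring R] (i j : Fin (e + 1)) :
    krylov N (Pi.single (Fin.last e) 1) i j = (N ^ (e - j)) i (Fin.last e) := by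
  simp [krylov]

theorem blockTriangular_krylov_single_last [Semiring R] (hN : N.VanishesBelowSuperdiag 1) :
    (krylov N (Pi.single (Fin.last e) 1)).BlockTriangular id := fun i j hij => by
  rw [krylov_single_last_apply]
  exact hN.pow _ _ _ (by simp only [id_eq, Fin.val_last] at hij ⊢; omega)

theorem krylov_single_last_apply_self [Semiring R] (hN : N.VanishesBelowSuperdiag 1)
    (hN₁ : ∀ i j : Fin (e + 1), (j : ℕ) = i + 1 → N i j = 1) (i : Fin (e + 1)) :
    krylov N (Pi.single (Fin.last e) 1) i i = 1 := by
  rw [krylov_single_last_apply]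
  exact hN.pow_apply_of_eq hN₁ _ (by simp only [Fin.val_last]; omega)

theorem exists_isUnit_blockTriangular_conj_shift [CommRing R] {d : ℕ}
    {N : Matrix (Fin d) (Fin d) R} (hN : N.VanishesBelowSuperdiag 1)
    (hN₁ : ∀ i j : Fin d, (j : ℕ) = i + 1 → N i j = 1) :
    ∃ J : Matrix (Fin d) (Fin d) R,
      IsUnit J ∧ J.BlockTriangular id ∧ shift R d = J⁻¹ * N * J := by
  obtain _ | e := d
  · exact ⟨1, isUnit_one, blockTriangular_one, Subsingleton.elim _ _⟩
  have hJ := blockTriangular_krylov_single_last hN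
  have hdet : IsUnit (krylov N (Pi.single (Fin.last e) 1)).det := by
    rw [det_of_isUpperTriangular hJ,
      prod_eq_one fun i _ => krylov_single_last_apply_self hN hN₁ i]
    exact isUnit_one
  refine ⟨_, (isUnit_iff_isUnit_det _).2 hdet, hJ, ?_⟩
  rw [Matrix.mul_assoc, ← krylov_mul_shift (hN.pow _).eq_zero,
    nonsing_inv_mul_cancel_left _ _ hdet]

end Unitriangular

section Exp

variable {K : Type*} [DivisionRing K] {N : ℕ}

theorem truncExp_shift_sub_one_apply (hN : d ≤ N) (i j : Fin d) :
    (truncExp K N (shift K d) - 1) i j =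
      ∑ m ∈ range (N - 1), ((Nat.factorial (m + 1) : K))⁻¹ * (shift K d ^ (m + 1)) i j := by
  obtain ⟨N, rfl⟩ : ∃ N', N = N' + 1 := ⟨N - 1, by have := i.pos; omega⟩
  rw [truncExp, sum_range_succ', Nat.factorial_zero, Nat.cast_one, inv_one, one_smul, pow_zero,
    add_sub_cancel_right, sum_apply, Nat.add_sub_cancel]
  simp only [smul_apply, smul_eq_mul]

theorem vanishesBelowSuperdiag_truncExp_shift_sub_one (hN : d ≤ N) :
    (truncExp K N (shift K d) - 1).VanishesBelowSuperdiag 1 := fun i j hij => by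
  rw [truncExp_shift_sub_one_apply hN]
  exact sum_eq_zero fun m _ => by
    rw [vanishesBelowSuperdiag_shift.pow (m + 1) i j (by omega), mul_zero]

theorem truncExp_shift_sub_one_apply_of_eq (hN : d ≤ N) {i j : Fin d}
    (hij : (j : ℕ) = i + 1) : (truncExp K N (shift K d) - 1) i j = 1 := by
  rw [truncExp_shift_sub_one_apply hN, sum_eq_single 0]
  · simp [shift_apply_of_eq hij]
  · intro m _ hm
    rw [vanishesBelowSuperdiag_shift.pow (m + 1) i j (by omega), mul_zero]
  · intro h
    simp only [mem_range] at h
    omega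

end Exp

end Matrix

theorem stmt_7_general (𝕜 : Type*) [RCLike 𝕜] (n : ℕ) :
    ∃ J : Matrix (Fin (2 * n)) (Fin (2 * n)) 𝕜, IsUnit J ∧ J.BlockTriangular id ∧
      (Matrix.of fun i j : Fin (2 * n) => if (j : ℕ) = (i : ℕ) + 1 then (1 : 𝕜) else 0)
        = J⁻¹ *
          ((∑ m ∈ Finset.range (2 * n), ((Nat.factorial m : 𝕜))⁻¹ •
              (Matrix.of fun i j : Fin (2 * n) =>
                if (j : ℕ) = (i : ℕ) + 1 then (1 : 𝕜) else 0) ^ m) - 1) * J :=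
  Matrix.exists_isUnit_blockTriangular_conj_shift
    (Matrix.vanishesBelowSuperdiag_truncExp_shift_sub_one le_rfl)
    (fun _ _ => Matrix.truncExp_shift_sub_one_apply_of_eq le_rfl)

/-- Let `S` be the backward shift on `K^(2n)` (`S e₁ = 0`, `S e_k = e_{k-1}` for
`2 ≤ k ≤ 2n`, with `K = ℝ` or `ℂ`). Then `S` and `e^S − I` are similar via an
invertible upper triangular matrix: there exists an invertible upper triangular `J`
with `S = J⁻¹ (e^S − I) J`. Here `e^S = ∑ S^m/m!` (a finite sum since `S^(2n) = 0`). -/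
theorem stmt_7 (𝕜 : Type*) [RCLike 𝕜] (n : ℕ) (hn : 0 < n) :
    ∃ J : Matrix (Fin (2 * n)) (Fin (2 * n)) 𝕜, IsUnit J ∧ J.BlockTriangular id ∧
      (Matrix.of fun i j : Fin (2 * n) => if (j : ℕ) = (i : ℕ) + 1 then (1 : 𝕜) else 0)
        = J⁻¹ *
          ((∑ m ∈ Finset.range (2 * n), ((Nat.factorial m : 𝕜))⁻¹ •
              (Matrix.of fun i j : Fin (2 * n) =>
                if (j : ℕ) = (i : ℕ) + 1 then (1 : 𝕜) else 0) ^ m) - 1) * J :=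
  stmt_7_general 𝕜 n
end

section
/- Let X be a Baire separable metrizable topological vector space and T a continuous linear operator on X with dense range and dense generalized kernel (the union of ker T^n over n ≥ 1 is dense). Then T is supercyclic: there exists x ∈ X such that {λ T^n x : λ ∈ K, n ∈ ℤ₊} is dense in X. -/
/-!
Birkhoff's transitivity argument: for each nonempty open `V` of a countable basis, the points
`x` with `c • T ^ n x ∈ V` for some `c, n` form a dense open set, and by Baire their
intersection is nonempty. Density of that open set comes from the generalized kernel: given
`u ∈ U` with `T ^ (m + 1) u = 0` and `v` with `T ^ (m + 1) v ∈ V`, a small perturbation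
`u + δ • v` stays in `U` and is mapped by `δ⁻¹ • T ^ (m + 1)` into `V`.
-/

open Topology Filter

theorem DenseRange.iterate {X : Type*} [TopologicalSpace X] {f : X → X} (hf : DenseRange f)
    (hcont : Continuous f) (n : ℕ) : DenseRange f^[n] := by
  induction n with
  | zero => exact denseRange_id
  | succ n ih => rw [Function.iterate_succ']; exact hf.comp ih hcont

theorem exists_dense_range_of_dense_iUnion_preimage {ι X Y : Type*} [TopologicalSpace X]
    [BaireSpace X] [Nonempty X] [TopologicalSpace Y] [SecondCountableTopology Y]
    {f : ι → X → Y} (hf : ∀ i, Continuous (f i))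
    (htrans : ∀ V : Set Y, IsOpen V → V.Nonempty → Dense (⋃ i, f i ⁻¹' V)) :
    ∃ x, Dense (Set.range fun i => f i x) := by
  obtain ⟨B, hBc, -, hB⟩ := TopologicalSpace.exists_countable_basis Y
  have hG : Dense (⋂ V ∈ {V ∈ B | V.Nonempty}, ⋃ i, f i ⁻¹' V) :=
    dense_biInter_of_isOpen
      (fun V hV => isOpen_iUnion fun i => (hB.isOpen hV.1).preimage (hf i))
      (hBc.mono fun _ hV => hV.1) fun V hV => htrans V (hB.isOpen hV.1) hV.2
  obtain ⟨x, hx⟩ := hG.nonempty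
  refine ⟨x, hB.dense_iff.mpr fun V hV hVne => ?_⟩
  obtain ⟨i, hi⟩ := Set.mem_iUnion.mp (Set.mem_iInter₂.mp hx V ⟨hV, hVne⟩)
  exact ⟨f i x, hi, i, rfl⟩

section

variable {𝕜 X : Type*} [NontriviallyNormedField 𝕜] [AddCommGroup X] [Module 𝕜 X]
  [TopologicalSpace X] [ContinuousAdd X] [ContinuousSMul 𝕜 X]

theorem IsOpen.exists_ne_zero_add_smul_mem {U : Set X} (hU : IsOpen U) {u : X} (hu : u ∈ U)
    (v : X) : ∃ δ : 𝕜, δ ≠ 0 ∧ u + δ • v ∈ U := by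
  have hcont : Continuous fun δ : 𝕜 => u + δ • v := by fun_prop
  have hnhds : ∀ᶠ δ in 𝓝 (0 : 𝕜), u + δ • v ∈ U :=
    hcont.continuousAt.preimage_mem_nhds (by simpa using hU.mem_nhds hu)
  have hne : ∀ᶠ δ in 𝓝[≠] (0 : 𝕜), δ ≠ 0 := self_mem_nhdsWithin
  obtain ⟨δ, hδU, hδ⟩ := ((hnhds.filter_mono nhdsWithin_le_nhds).and hne).exists
  exact ⟨δ, hδ, hδU⟩

theorem ContinuousLinearMap.dense_iUnion_preimage_smul_pow {T : X →L[𝕜] X}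
    (hrange : DenseRange T)
    (hker : Dense (⋃ n : ℕ, (LinearMap.ker ((T ^ (n + 1) : X →L[𝕜] X) : X →ₗ[𝕜] X) : Set X)))
    {V : Set X} (hV : IsOpen V) (hVne : V.Nonempty) :
    Dense (⋃ p : 𝕜 × ℕ, (fun x => p.1 • (T ^ p.2) x) ⁻¹' V) := by
  refine dense_iff_inter_open.mpr fun U hU hUne => ?_
  obtain ⟨u, huU, hu⟩ := hker.inter_open_nonempty U hU hUne
  obtain ⟨m, hTu⟩ := Set.mem_iUnion.mp hu
  have hTu : (T ^ (m + 1)) u = 0 := hTu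
  have hpow : DenseRange (T ^ (m + 1)) :=
    FunLike.coe_pow_eq_iterate T (m + 1) ▸ hrange.iterate T.continuous (m + 1)
  obtain ⟨v, hv⟩ := hpow.exists_mem_open hV hVne
  obtain ⟨δ, hδ, hδU⟩ := hU.exists_ne_zero_add_smul_mem (𝕜 := 𝕜) huU v
  refine ⟨u + δ • v, hδU, Set.mem_iUnion.mpr ⟨(δ⁻¹, m + 1), ?_⟩⟩
  simpa only [Set.mem_preimage, map_add, hTu, map_smul, zero_add, smul_smul,
    inv_mul_cancel₀ hδ, one_smul] using hv

end

/-- Let `X` be a Baire separable metrizable topological vector space and `T` a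
continuous linear operator on `X` with dense range and dense generalized kernel
(`⋃_{n≥1} ker T^n` is dense). Then `T` is supercyclic: there exists `x ∈ X` such
that `{λ T^n x : λ ∈ K, n ∈ ℤ₊}` is dense in `X`. -/
theorem stmt_8 (𝕜 : Type*) [RCLike 𝕜] (X : Type*) [AddCommGroup X] [Module 𝕜 X]
    [TopologicalSpace X] [IsTopologicalAddGroup X] [ContinuousSMul 𝕜 X]
    [BaireSpace X] [TopologicalSpace.SeparableSpace X] [TopologicalSpace.MetrizableSpace X]
    (T : X →L[𝕜] X)
    (hrange : Dense (Set.range ⇑T))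
    (hker : Dense (⋃ n : ℕ, (LinearMap.ker ((T ^ (n + 1) : X →L[𝕜] X) : X →ₗ[𝕜] X) : Set X))) :
    ∃ x : X, Dense {y : X | ∃ (c : 𝕜) (n : ℕ), y = c • (T ^ n) x} := by
  let := TopologicalSpace.metrizableSpaceMetric X
  have : SecondCountableTopology X := UniformSpace.secondCountable_of_separable X
  obtain ⟨x, hx⟩ := exists_dense_range_of_dense_iUnion_preimage
    (f := fun (p : 𝕜 × ℕ) x => p.1 • (T ^ p.2) x) (fun p => (T ^ p.2).continuous.const_smul p.1)
    fun _ => T.dense_iUnion_preimage_smul_pow hrange hker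
  refine ⟨x, hx.mono ?_⟩
  rintro _ ⟨⟨c, n⟩, rfl⟩
  exact ⟨c, n, rfl⟩
end

section
/- Let X be a topological vector space and T a continuous linear operator on X whose extended backward shift kernel ker†T = span(⋃_{n≥1} (T^n(X) ∩ ker T^n)) is dense in X. Then I + T is topologically mixing. -/
/-!
Write a generator of `ker† T` as `x = T ^ m y` with `T ^ (2 * m) y = 0`. On the span of
`y, T y, …, T ^ (2 * m - 1) y` the operator `(1 + T) ^ k` acts through the coefficients
`k.choose j` of `(1 + X) ^ k`. Taking lower-order coefficients `γ i / k ^ (m - i)` for `i < m`,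
the coefficients of `T ^ (m + r) y` can be prescribed exactly: after rescaling by `k ^ r` this is
a linear system whose matrix `k.choose (m + r - i) / k ^ (m + r - i)` tends to the invertible
matrix `1 / (m + r - i)!`. This gives `a k → x` with `(1 + T) ^ k (a k) → 0` and `b k → 0` with
`(1 + T) ^ k (b k) → x`. Both properties pass to linear combinations, so they hold on the dense
set `ker† T`, and `a k + b k`, built from a point of `U` and a point of `V`, witnesses mixing.
-/

section

open Filter Topology Polynomial Finset

theorem tendsto_choose_mul_inv_pow {𝕜 : Type*} [RCLike 𝕜] (j : ℕ) :
    Tendsto (fun k : ℕ => (k.choose j : 𝕜) * (k : 𝕜)⁻¹ ^ j) atTop (𝓝 (j.factorial : 𝕜)⁻¹) := by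
  have hk : Tendsto (fun k : ℕ => (k : ℝ) * (k : ℝ)⁻¹) atTop (𝓝 1) :=
    tendsto_const_nhds.congr' <| by
      filter_upwards [eventually_ne_atTop 0] with k hk
      rw [mul_inv_cancel₀ (Nat.cast_ne_zero.mpr hk)]
  simpa [Function.comp_def, div_eq_mul_inv] using
    (RCLike.continuous_ofReal (K := 𝕜)).tendsto _ |>.comp
      (ProbabilityTheory.tendsto_choose_mul_pow_atTop j hk)

variable (K : Type*) [Field K]

noncomputable def invFactorialMatrix (m : ℕ) : Matrix (Fin m) (Fin m) K :=
  Matrix.of fun r i => ((m + r - i : ℕ).factorial : K)⁻¹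

noncomputable def scaledChooseMatrix (m k : ℕ) : Matrix (Fin m) (Fin m) K :=
  Matrix.of fun r i => (k.choose (m + r - i) : K) * (k : K)⁻¹ ^ (m + r - i)

variable {K}

-- Pulling `(m + r)!⁻¹` out of row `r` leaves the Vandermonde-type matrix
-- `(m + r).descFactorial i`.
theorem det_invFactorialMatrix_ne_zero [CharZero K] (m : ℕ) :
    (invFactorialMatrix K m).det ≠ 0 := by
  have hfac (n : ℕ) : (n.factorial : K) ≠ 0 := Nat.cast_ne_zero.mpr n.factorial_ne_zero
  have hB : invFactorialMatrix K m =
      Matrix.diagonal (fun r : Fin m => ((m + r : ℕ).factorial : K)⁻¹) *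
        Matrix.of (fun r i : Fin m => (descPochhammer K i).eval ((m + r : ℕ) : K)) := by
    ext r i
    have hdesc := Nat.factorial_mul_descFactorial (show (i : ℕ) ≤ m + r by omega)
    rw [Matrix.diagonal_mul, Matrix.of_apply, descPochhammer_eval_eq_descFactorial,
      invFactorialMatrix, Matrix.of_apply, inv_mul_eq_div, eq_div_iff (hfac _), ← hdesc,
      Nat.cast_mul, inv_mul_cancel_left₀ (hfac _)]
  rw [hB, Matrix.det_mul, Matrix.det_diagonal,
    ← Matrix.det_eval_matrixOfPolynomials_eq_det_vandermonde _ _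
      (fun i => descPochhammer_natDegree K i) (fun i => monic_descPochhammer K i)]
  refine mul_ne_zero (prod_ne_zero_iff.mpr fun r _ => inv_ne_zero (hfac _))
    (Matrix.det_vandermonde_ne_zero_iff.mpr fun r r' h => ?_)
  exact Fin.ext (Nat.add_left_cancel (Nat.cast_injective h))

open Matrix in
theorem Matrix.exists_tendsto_and_eventually_mulVec_eq {α ι : Type*} [Fintype ι] [DecidableEq ι]
    [TopologicalSpace K] [IsTopologicalDivisionRing K] [T1Space K] {l : Filter α}
    {A : α → Matrix ι ι K} {A₀ : Matrix ι ι K} {u : α → ι → K} {u₀ : ι → K}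
    (hA : Tendsto A l (𝓝 A₀)) (hA₀ : A₀.det ≠ 0) (hu : Tendsto u l (𝓝 u₀)) :
    ∃ γ : α → ι → K, (∃ γ₀, Tendsto γ l (𝓝 γ₀)) ∧ ∀ᶠ k in l, A k *ᵥ γ k = u k := by
  have hinv : ContinuousAt Inv.inv A₀ :=
    continuousAt_matrix_inv A₀ (by rw [Ring.inverse_eq_inv']; exact continuousAt_inv₀ hA₀)
  have hdet : ∀ᶠ k in l, (A k).det ≠ 0 :=
    ((continuous_id.matrix_det.tendsto A₀).comp hA).eventually_ne hA₀
  refine ⟨fun k => (A k)⁻¹ *ᵥ u k, ⟨A₀⁻¹ *ᵥ u₀, ?_⟩, ?_⟩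
  · exact ((continuous_fst.matrix_mulVec continuous_snd).tendsto _).comp
      ((hinv.tendsto.comp hA).prodMk_nhds hu)
  · filter_upwards [hdet] with k hk
    rw [Matrix.mulVec_mulVec, Matrix.mul_nonsing_inv _ (isUnit_iff_ne_zero.mpr hk),
      Matrix.one_mulVec]

theorem tendsto_scaledChooseMatrix {𝕜 : Type*} [RCLike 𝕜] (m : ℕ) :
    Tendsto (scaledChooseMatrix 𝕜 m) atTop (𝓝 (invFactorialMatrix 𝕜 m)) :=
  tendsto_pi_nhds.2 fun _ => tendsto_pi_nhds.2 fun _ => tendsto_choose_mul_inv_pow _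

theorem coeff_one_add_X_pow_mul_sum_monomial {R : Type*} [CommSemiring R] {m : ℕ}
    (c : Fin m → R) (k l : ℕ) :
    ((1 + X) ^ k * ∑ i : Fin m, monomial i (c i)).coeff l =
      ∑ i : Fin m, c i * if (i : ℕ) ≤ l then (k.choose (l - i) : R) else 0 := by
  simp only [mul_sum, finsetSum_coeff, ← C_mul_X_pow_eq_monomial, mul_left_comm _ (C _),
    coeff_C_mul, coeff_mul_X_pow', coeff_one_add_X_pow]

-- Writing `q k = ∑ γ k i (k⁻¹) ^ (m - i) X ^ i`, the coefficients of `(1 + X) ^ k * q k` of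
-- degree `m + r` are `k ^ r` times the entries of `scaledChooseMatrix 𝕜 m k *ᵥ γ k`.
theorem exists_coeff_one_add_X_pow_mul_eq {𝕜 : Type*} [RCLike 𝕜] (m : ℕ) {w : ℕ → ℕ → 𝕜}
    {w₀ : Fin m → 𝕜}
    (hw : Tendsto (fun k (r : Fin m) => w k r * (k : 𝕜)⁻¹ ^ (r : ℕ)) atTop (𝓝 w₀)) :
    ∃ q : ℕ → 𝕜[X], (∀ l, Tendsto (fun k => (q k).coeff l) atTop (𝓝 0)) ∧
      (∀ l < m, Tendsto (fun k => ((1 + X) ^ k * q k).coeff l) atTop (𝓝 0)) ∧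
      ∀ᶠ k in atTop, ∀ r < m, ((1 + X) ^ k * q k).coeff (m + r) = w k r := by
  obtain ⟨γ, ⟨γ₀, hγ⟩, hsol⟩ := Matrix.exists_tendsto_and_eventually_mulVec_eq
    (tendsto_scaledChooseMatrix m) (det_invFactorialMatrix_ne_zero m) hw
  have hγi (i : Fin m) : Tendsto (fun k => γ k i) atTop (𝓝 (γ₀ i)) := tendsto_pi_nhds.1 hγ i
  have hinv {d : ℕ} (hd : d ≠ 0) : Tendsto (fun k : ℕ => (k : 𝕜)⁻¹ ^ d) atTop (𝓝 0) := by
    simpa [zero_pow hd] using (tendsto_inv_atTop_nhds_zero_nat (𝕜 := 𝕜)).pow d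
  refine ⟨fun k => ∑ i : Fin m, monomial i (γ k i * (k : 𝕜)⁻¹ ^ (m - i)), fun l => ?_,
    fun l hl => ?_, ?_⟩
  · have hterm (i : Fin m) : Tendsto (fun k : ℕ =>
        if (i : ℕ) = l then γ k i * (k : 𝕜)⁻¹ ^ (m - i) else 0) atTop (𝓝 0) := by
      split_ifs
      · simpa using (hγi i).mul (hinv (d := m - i) (by omega))
      · exact tendsto_const_nhds
    simpa [finsetSum_coeff, coeff_monomial] using tendsto_finsetSum univ fun i _ => hterm i
  · have hterm (i : Fin m) : Tendsto (fun k : ℕ => γ k i * (k : 𝕜)⁻¹ ^ (m - i) *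
        if (i : ℕ) ≤ l then (k.choose (l - i) : 𝕜) else 0) atTop (𝓝 0) := by
      split_ifs with hil
      · have hsplit (k : ℕ) : γ k i * (k : 𝕜)⁻¹ ^ (m - i) * (k.choose (l - i) : 𝕜) =
            γ k i * ((k.choose (l - i) : 𝕜) * (k : 𝕜)⁻¹ ^ (l - i)) * (k : 𝕜)⁻¹ ^ (m - l) := by
          rw [show m - i = (l - i) + (m - l) by omega, pow_add]
          ring
        have hlim := ((hγi i).mul (tendsto_choose_mul_inv_pow (l - i))).mul
          (hinv (d := m - l) (by omega))
        rw [mul_zero] at hlim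
        exact hlim.congr fun k => (hsplit k).symm
      · simp
    simpa [coeff_one_add_X_pow_mul_sum_monomial] using tendsto_finsetSum univ fun i _ => hterm i
  · filter_upwards [hsol, eventually_ne_atTop 0] with k hk hk0 r hr
    have hrow := congrFun hk ⟨r, hr⟩
    simp only [Matrix.mulVec, dotProduct, scaledChooseMatrix, Matrix.of_apply] at hrow
    have hpow : (k : 𝕜) ^ r * (k : 𝕜)⁻¹ ^ r = 1 := by
      rw [← mul_pow, mul_inv_cancel₀ (Nat.cast_ne_zero.mpr hk0), one_pow]
    calc ((1 + X) ^ k * ∑ i : Fin m, monomial i (γ k i * (k : 𝕜)⁻¹ ^ (m - i))).coeff (m + r)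
        = (k : 𝕜) ^ r * ∑ i : Fin m,
            (k.choose (m + r - i) : 𝕜) * (k : 𝕜)⁻¹ ^ (m + r - i) * γ k i := by
          rw [coeff_one_add_X_pow_mul_sum_monomial, mul_sum]
          refine sum_congr rfl fun i _ => ?_
          rw [if_pos (by omega), show m + r - i = (m - i) + r by omega, pow_add]
          linear_combination
            (-(γ k i * (k : 𝕜)⁻¹ ^ (m - i) * (k.choose (m - i + r) : 𝕜))) * hpow
      _ = w k r := by rw [hrow, mul_left_comm, hpow, mul_one]

namespace ContinuousLinearMap

section Semiring

variable {R E : Type*} [Semiring R] [AddCommMonoid E] [Module R E] [TopologicalSpace E]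
  [ContinuousAdd E] [ContinuousConstSMul R E]

def asymptoticGraph (S : E →L[R] E) : Submodule R (E × E) where
  carrier := {p | ∃ a : ℕ → E, Tendsto a atTop (𝓝 p.1) ∧
    Tendsto (fun k => (S ^ k) (a k)) atTop (𝓝 p.2)}
  zero_mem' := ⟨0, tendsto_const_nhds, by simpa using tendsto_const_nhds⟩
  add_mem' := by
    rintro p p' ⟨a, ha, hSa⟩ ⟨a', ha', hSa'⟩
    exact ⟨a + a', ha.add ha', by simpa using hSa.add hSa'⟩
  smul_mem' := by
    rintro c p ⟨a, ha, hSa⟩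
    exact ⟨c • a, ha.const_smul c, by simpa using hSa.const_smul c⟩

theorem exists_forall_ge_image_pow_inter_nonempty_of_dense {S : E →L[R] E}
    (hker : Dense {x : E | (x, 0) ∈ S.asymptoticGraph})
    (hran : Dense {x : E | (0, x) ∈ S.asymptoticGraph})
    {U V : Set E} (hU : IsOpen U) (hV : IsOpen V) (hUne : U.Nonempty) (hVne : V.Nonempty) :
    ∃ N, ∀ k, N ≤ k → (⇑(S ^ k) '' U ∩ V).Nonempty := by
  obtain ⟨u, hu, huU⟩ := hker.exists_mem_open hU hUne
  obtain ⟨v, hv, hvV⟩ := hran.exists_mem_open hV hVne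
  obtain ⟨a, ha, hSa⟩ : (u, v) ∈ S.asymptoticGraph := by
    simpa using S.asymptoticGraph.add_mem hu hv
  obtain ⟨N, hN⟩ := eventually_atTop.mp
    ((ha.eventually (hU.mem_nhds huU)).and (hSa.eventually (hV.mem_nhds hvV)))
  exact ⟨N, fun k hk => ⟨_, Set.mem_image_of_mem _ (hN k hk).1, (hN k hk).2⟩⟩

end Semiring

variable {𝕜 E : Type*} [RCLike 𝕜] [AddCommGroup E] [Module 𝕜 E] [TopologicalSpace E]
  [IsTopologicalAddGroup E] [ContinuousSMul 𝕜 E] {T : E →L[𝕜] E} {n : ℕ} {y : E}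

theorem aeval_apply_eq_sum_range (hy : (T ^ n) y = 0) (p : 𝕜[X]) :
    aeval T p y = ∑ l ∈ range n, p.coeff l • (T ^ l) y := by
  rw [aeval_eq_sum_range' (n := p.natDegree + 1 + n) (by omega), _root_.sum_apply]
  refine (sum_subset (range_subset_range.2 (by omega)) fun l _ hl => ?_).symm
  obtain ⟨j, rfl⟩ := Nat.exists_eq_add_of_le' (not_lt.1 (mem_range.not.1 hl))
  rw [smul_apply, pow_add, mul_apply_eq_comp, hy, map_zero, smul_zero]

theorem mk_sum_mem_asymptoticGraph (hy : (T ^ n) y = 0) {q : ℕ → 𝕜[X]} {c d : ℕ → 𝕜}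
    (hq : ∀ l < n, Tendsto (fun k => (q k).coeff l) atTop (𝓝 (c l)))
    (hTq : ∀ l < n, Tendsto (fun k => ((1 + X) ^ k * q k).coeff l) atTop (𝓝 (d l))) :
    (∑ l ∈ range n, c l • (T ^ l) y, ∑ l ∈ range n, d l • (T ^ l) y) ∈
      (1 + T).asymptoticGraph := by
  refine ⟨fun k => aeval T (q k) y, ?_, ?_⟩
  · simp_rw [aeval_apply_eq_sum_range hy]
    exact tendsto_finsetSum _ fun l hl => (hq l (mem_range.1 hl)).smul_const _
  · have h (k : ℕ) : ((1 + T) ^ k) (aeval T (q k) y) = aeval T ((1 + X) ^ k * q k) y := by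
      rw [map_mul, mul_apply_eq_comp, map_pow, map_add, map_one, aeval_X]
    simp_rw [h, aeval_apply_eq_sum_range hy]
    exact tendsto_finsetSum _ fun l hl => (hTq l (mem_range.1 hl)).smul_const _

variable {m : ℕ}

-- `w k r = -k.choose r` cancels the coefficients of `(1 + X) ^ k * X ^ m` in degrees `m + r`.
theorem mk_pow_apply_zero_mem_asymptoticGraph (hy : (T ^ (2 * m)) y = 0) :
    ((T ^ m) y, 0) ∈ (1 + T).asymptoticGraph := by
  rcases Nat.eq_zero_or_pos m with rfl | hm
  · obtain rfl : y = 0 := by simpa using hy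
    rw [map_zero]
    exact zero_mem _
  obtain ⟨q, hq, hlow, hhigh⟩ := exists_coeff_one_add_X_pow_mul_eq (𝕜 := 𝕜) m
    (w := fun k r => -(k.choose r : 𝕜)) (w₀ := fun r => -((r : ℕ).factorial : 𝕜)⁻¹)
    (tendsto_pi_nhds.2 fun r => by simpa using (tendsto_choose_mul_inv_pow (𝕜 := 𝕜) r).neg)
  have key := mk_sum_mem_asymptoticGraph hy (q := fun k => X ^ m + q k)
    (c := fun l => if l = m then 1 else 0) (d := 0) (fun l _ => ?_) (fun l hl => ?_)
  · simpa [ite_smul, sum_ite_eq', hm] using key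
  · simpa [coeff_X_pow] using tendsto_const_nhds.add (hq l)
  · rcases lt_or_ge l m with hlm | hml
    · simpa [mul_add, coeff_mul_X_pow', hlm.not_ge] using hlow l hlm
    · obtain ⟨r, rfl⟩ := Nat.exists_eq_add_of_le hml
      refine tendsto_const_nhds.congr' ?_
      filter_upwards [hhigh] with k hk
      rw [mul_add, coeff_add, hk r (by omega), coeff_mul_X_pow', if_pos (by omega),
        coeff_one_add_X_pow, Nat.add_sub_cancel_left, add_neg_cancel, Pi.zero_apply]

theorem mk_zero_pow_apply_mem_asymptoticGraph (hy : (T ^ (2 * m)) y = 0) :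
    (0, (T ^ m) y) ∈ (1 + T).asymptoticGraph := by
  rcases Nat.eq_zero_or_pos m with rfl | hm
  · obtain rfl : y = 0 := by simpa using hy
    rw [map_zero]
    exact zero_mem _
  obtain ⟨q, hq, hlow, hhigh⟩ := exists_coeff_one_add_X_pow_mul_eq (𝕜 := 𝕜) m
    (w := fun _ r => if r = 0 then 1 else 0) (w₀ := fun r => if (r : ℕ) = 0 then 1 else 0)
    (tendsto_pi_nhds.2 fun r => by rcases r with ⟨_ | r, hr⟩ <;> simp)
  have key := mk_sum_mem_asymptoticGraph hy (q := q) (c := 0)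
    (d := fun l => if l = m then 1 else 0) (fun l _ => hq l) (fun l hl => ?_)
  · simpa [ite_smul, sum_ite_eq', hm] using key
  · rcases lt_or_ge l m with hlm | hml
    · simpa [hlm.ne] using hlow l hlm
    · obtain ⟨r, rfl⟩ := Nat.exists_eq_add_of_le hml
      refine tendsto_const_nhds.congr' ?_
      filter_upwards [hhigh] with k hk
      rw [hk r (by omega)]
      simp

end ContinuousLinearMap

end

open ContinuousLinearMap in
/-- Let `X` be a topological vector space and `T` a continuous linear operator on `X`
whose extended backward shift kernel `ker† T = span(⋃_{n≥1} (T^n(X) ∩ ker T^n))` is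
dense in `X`. Then `I + T` is topologically mixing. -/
theorem stmt_11 (𝕜 : Type*) [RCLike 𝕜] (X : Type*) [AddCommGroup X] [Module 𝕜 X]
    [TopologicalSpace X] [IsTopologicalAddGroup X] [ContinuousSMul 𝕜 X]
    (T : X →L[𝕜] X)
    (hker : Dense ((Submodule.span 𝕜
        (⋃ n : ℕ, (Set.range ⇑(T ^ (n + 1)) ∩ (LinearMap.ker ((T ^ (n + 1) : X →L[𝕜] X) : X →ₗ[𝕜] X) : Set X))) :
          Submodule 𝕜 X) : Set X)) :
    ∀ U V : Set X, IsOpen U → IsOpen V → U.Nonempty → V.Nonempty →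
      ∃ N : ℕ, ∀ k : ℕ, N ≤ k → (⇑((1 + T) ^ k) '' U ∩ V).Nonempty := by
  have hgen {x : X} (hx : x ∈ ⋃ n : ℕ, (Set.range ⇑(T ^ (n + 1)) ∩
      (LinearMap.ker ((T ^ (n + 1) : X →L[𝕜] X) : X →ₗ[𝕜] X) : Set X))) :
      ∃ m y, x = (T ^ m) y ∧ (T ^ (2 * m)) y = 0 := by
    obtain ⟨n, ⟨y, rfl⟩, hxker⟩ := Set.mem_iUnion.1 hx
    exact ⟨n + 1, y, rfl, by rwa [two_mul, pow_add, mul_apply_eq_comp]⟩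
  intro U V hU hV hUne hVne
  refine exists_forall_ge_image_pow_inter_nonempty_of_dense (hker.mono ?_) (hker.mono ?_) hU hV hUne hVne
  · refine (Submodule.span_le (p := (1 + T).asymptoticGraph.comap (LinearMap.inl 𝕜 X X))).2
      fun x hx => ?_
    obtain ⟨m, y, rfl, hy⟩ := hgen hx
    exact mk_pow_apply_zero_mem_asymptoticGraph hy
  · refine (Submodule.span_le (p := (1 + T).asymptoticGraph.comap (LinearMap.inr 𝕜 X X))).2
      fun x hx => ?_
    obtain ⟨m, y, rfl, hy⟩ := hgen hx
    exact mk_zero_pow_apply_mem_asymptoticGraph hy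
end

section
/- Every cyclic continuous linear operator on φ (the countable direct sum of copies of the scalar field with the strongest locally convex topology) is similar to the multiplication operator M on the polynomial space K[z], Mp(z) = z·p(z). Conversely M is cyclic. -/
/-!
A vector `x` gives the `K[z]`-linear orbit map `p ↦ p(T) x`, which intertwines multiplication
by `z` with `T`, and `x` is cyclic exactly when the orbit map is onto. A nonzero kernel would
contain a monic polynomial `g`, and then every `p(T) x` equals `(p mod g)(T) x`, so the range
would be finite-dimensional; as `K[z]` is not, the orbit map of a cyclic vector of an operator
on `K[z]` is a linear isomorphism conjugating `T` to `M`. Conversely, if `T = J M J⁻¹` then the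
orbit map of `J 1` is `J` itself.
-/

open Polynomial

section CommSemiring

variable {R M : Type*} [CommSemiring R] [AddCommMonoid M] [Module R M]

noncomputable def orbitMap (T : Module.End R M) (x : M) : R[X] →ₗ[R] M :=
  LinearMap.applyₗ x ∘ₗ (aeval T).toLinearMap

variable (T : Module.End R M) (x : M)

@[simp]
theorem orbitMap_apply (p : R[X]) : orbitMap T x p = aeval T p x := rfl

theorem orbitMap_mul (p q : R[X]) : orbitMap T x (p * q) = aeval T p (orbitMap T x q) := by
  simp only [orbitMap_apply, map_mul, Module.End.mul_apply]

theorem orbitMap_X_mul (p : R[X]) : orbitMap T x (X * p) = T (orbitMap T x p) := by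
  rw [orbitMap_mul, aeval_X]

theorem range_orbitMap :
    LinearMap.range (orbitMap T x) = Submodule.span R (Set.range fun n => (T ^ n) x) := by
  have hspan : Submodule.span R (Set.range fun n : ℕ => (X : R[X]) ^ n) = ⊤ := by
    simpa only [coe_basisMonomials, monomial_one_right_eq_X_pow] using (basisMonomials R).span_eq
  rw [LinearMap.range_eq_map, ← hspan, Submodule.map_span, ← Set.range_comp]
  simp only [Function.comp_def, orbitMap_apply, map_pow, aeval_X]

theorem orbitMap_eq_of_intertwines (J : R[X] →ₗ[R] M) (hJ : ∀ q, T (J q) = J (X * q)) :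
    orbitMap T (J 1) = J := by
  suffices h : ∀ p q, aeval T p (J q) = J (p * q) by
    exact LinearMap.ext fun p => by simpa using h p 1
  intro p
  induction p using Polynomial.induction_on with
  | C a => intro q; simp [← smul_eq_C_mul]
  | add p r hp hr => intro q; simp [add_mul, hp, hr]
  | monomial n a ih =>
    intro q
    rw [pow_succ, ← mul_assoc, map_mul, Module.End.mul_apply, aeval_X, hJ, ih]
    ring_nf

end CommSemiring

section Field

variable {K M : Type*} [Field K] [AddCommGroup M] [Module K M] (T : Module.End K M) (x : M)

theorem orbitMap_modByMonic {g : K[X]} (hg : orbitMap T x g = 0) (p : K[X]) :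
    orbitMap T x (p %ₘ g) = orbitMap T x p := by
  conv_rhs => rw [← modByMonic_add_div p g]
  rw [map_add, mul_comm, orbitMap_mul, hg, map_zero, add_zero]

theorem finite_range_orbitMap_of_ker_ne_bot (hker : LinearMap.ker (orbitMap T x) ≠ ⊥) :
    Module.Finite K (LinearMap.range (orbitMap T x)) := by
  obtain ⟨f, hf, hf0⟩ := (Submodule.ne_bot_iff _).1 hker
  set g := f * C f.leadingCoeff⁻¹
  have hg : g.Monic := monic_mul_leadingCoeff_inv hf0
  have hgker : orbitMap T x g = 0 := by
    rw [show g = C f.leadingCoeff⁻¹ * f from mul_comm _ _, orbitMap_mul, LinearMap.mem_ker.1 hf,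
      map_zero]
  have hrange : LinearMap.range (orbitMap T x) =
      (degreeLT K g.natDegree).map (orbitMap T x) := by
    refine le_antisymm ?_ LinearMap.map_le_range
    rintro _ ⟨p, rfl⟩
    refine ⟨p %ₘ g, mem_degreeLT.2 ?_, orbitMap_modByMonic T x hgker p⟩
    rw [← degree_eq_natDegree hg.ne_zero]
    exact degree_modByMonic_lt p hg
  classical
  rw [Module.Finite.iff_fg, hrange]
  exact Submodule.FG.map _ ⟨_, degreeLT_eq_span_X_pow.symm⟩

theorem injective_orbitMap_of_range_eq_top (hM : ¬ Module.Finite K M)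
    (hx : LinearMap.range (orbitMap T x) = ⊤) : Function.Injective (orbitMap T x) := by
  rw [← LinearMap.ker_eq_bot]
  by_contra hker
  have := finite_range_orbitMap_of_ker_ne_bot T x hker
  rw [hx] at this
  exact hM (Module.Finite.equiv (LinearEquiv.ofTop ⊤ rfl))

end Field

/-- Every cyclic continuous linear operator on `φ` is similar to the multiplication
operator `M` on `K[z]`, `Mp(z) = z·p(z)`; conversely `M` is cyclic. Here `φ` is
identified with the polynomial space `K[z]`; in `φ` every linear subspace is closed,
so dense span means span equals everything, every linear map is continuous, and a
linear homeomorphism is the same as a linear equivalence. -/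
theorem stmt_13 (𝕜 : Type*) [RCLike 𝕜] (T : Module.End 𝕜 (Polynomial 𝕜)) :
    (∃ x : Polynomial 𝕜, Submodule.span 𝕜 {y : Polynomial 𝕜 | ∃ n : ℕ, y = (T ^ n) x} = ⊤) ↔
      ∃ J : Polynomial 𝕜 ≃ₗ[𝕜] Polynomial 𝕜,
        ∀ p : Polynomial 𝕜, T p = J (Polynomial.X * J.symm p) := by
  have orbit_set (x : 𝕜[X]) : {y | ∃ n : ℕ, y = (T ^ n) x} = Set.range fun n => (T ^ n) x := by
    ext y; simp [eq_comm]
  simp only [orbit_set, ← range_orbitMap]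
  constructor
  · rintro ⟨x, hx⟩
    let J := LinearEquiv.ofBijective (orbitMap T x)
      ⟨injective_orbitMap_of_range_eq_top T x not_finite hx, LinearMap.range_eq_top.1 hx⟩
    refine ⟨J, fun p => ?_⟩
    change T p = orbitMap T x (X * J.symm p)
    rw [orbitMap_X_mul]
    exact congrArg T (J.apply_symm_apply p).symm
  · rintro ⟨J, hJ⟩
    refine ⟨J 1, ?_⟩
    have hJX : ∀ q, T (J q) = J (X * q) := fun q => by simp [hJ]
    rw [show J 1 = (J : 𝕜[X] →ₗ[𝕜] 𝕜[X]) 1 from rfl, orbitMap_eq_of_intertwines T _ hJX]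
    exact LinearMap.range_eq_top.2 J.surjective
end

section
/- Every multicyclic continuous linear operator on φ fails to be surjective. -/
/-!
Regard `φ = K[z]` as a `K[X]`-module with `X` acting by `T`. Multicyclicity says this module is
finitely generated, and surjectivity of `T` says it equals `X` times itself, so Nakayama's lemma
yields `r ≡ 1 mod X` with `r(T) = 0`. Thus `T` is algebraic, so the powers of `T` span a
finite-dimensional space, and then so does `φ = span ⋃ Tⁿ(L)`, which is absurd.
-/

open Polynomial Module Submodule

namespace Module.End

variable {R M : Type*} [CommRing R] [AddCommGroup M] [Module R M]

def IsMulticyclic (T : End R M) : Prop :=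
  ∃ L : Submodule R M, L.FG ∧ ⨆ n : ℕ, L.map (T ^ n) = ⊤

variable {T : End R M}

theorem IsMulticyclic.finite_aeval (h : T.IsMulticyclic) : Module.Finite R[X] (AEval' T) := by
  obtain ⟨_, ⟨s, rfl⟩, hs⟩ := h
  refine ⟨fg_def.2 ⟨AEval'.of T '' s, s.finite_toSet.image _, eq_top_iff.2 fun v _ => ?_⟩⟩
  obtain ⟨x, rfl⟩ := (AEval'.of T).surjective v
  suffices ⨆ n : ℕ, (span R (s : Set M)).map (T ^ n) ≤
      ((span R[X] (AEval'.of T '' s)).restrictScalars R).comap (AEval'.of T).toLinearMap from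
    this (hs ▸ mem_top)
  refine iSup_le fun n => map_le_iff_le_comap.2 <| span_le.2 fun y hy => ?_
  simp only [SetLike.mem_coe, mem_comap, restrictScalars_mem, LinearEquiv.coe_coe]
  rw [← End.smul_def, ← AEval'.X_pow_smul_of]
  exact smul_mem _ _ (subset_span (Set.mem_image_of_mem _ hy))

theorem isAlgebraic_of_surjective [Nontrivial R] [Module.Finite R[X] (AEval' T)]
    (hT : Function.Surjective T) : IsAlgebraic R T := by
  have hX : (⊤ : Submodule R[X] (AEval' T)) ≤ Ideal.span {(X : R[X])} • ⊤ := by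
    rintro v -
    obtain ⟨w, hw⟩ := hT ((AEval'.of T).symm v)
    rw [← (AEval'.of T).apply_symm_apply v, ← hw, ← AEval'.X_smul_of]
    exact smul_mem_smul (Ideal.mem_span_singleton_self X) mem_top
  obtain ⟨r, hr1, hr⟩ :=
    exists_sub_one_mem_and_smul_eq_zero_of_fg_of_le_smul _ _ Module.Finite.fg_top hX
  refine ⟨r, ?_, LinearMap.ext fun x => (AEval'.of T).injective ?_⟩
  · rintro rfl
    rw [zero_sub, Ideal.mem_span_singleton, dvd_neg, ← isUnit_iff_dvd_one] at hr1
    exact not_isUnit_X hr1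
  · rw [LinearMap.zero_apply, map_zero, ← End.smul_def, AEval.of_aeval_smul]
    exact hr _ mem_top

theorem IsMulticyclic.finite_of_isIntegral (h : T.IsMulticyclic) (hT : IsIntegral R T) :
    Module.Finite R M := by
  obtain ⟨L, hL, hsup⟩ := h
  have hle : ⨆ n : ℕ, L.map (T ^ n) ≤
      map₂ LinearMap.applyₗ.flip (Algebra.adjoin R {T}).toSubmodule L :=
    iSup_le fun n => map_le_iff_le_comap.2 fun y hy =>
      apply_mem_map₂ _ (Subalgebra.pow_mem _ (Algebra.self_mem_adjoin_singleton R T) n) hy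
  rw [hsup, top_le_iff] at hle
  exact ⟨hle ▸ hT.fg_adjoin_singleton.map₂ _ hL⟩

theorem IsMulticyclic.finite_of_surjective {K V : Type*} [Field K] [AddCommGroup V] [Module K V]
    {T : End K V} (h : T.IsMulticyclic) (hT : Function.Surjective T) : Module.Finite K V :=
  haveI := h.finite_aeval
  h.finite_of_isIntegral (isAlgebraic_of_surjective hT).isIntegral

end Module.End

/-- Every multicyclic continuous linear operator on `φ` fails to be surjective. Here
`φ` is identified with the polynomial space `K[z]` (every linear map on `φ` is
continuous, and every linear subspace is closed so dense span means span equals `φ`);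
`T` is multicyclic if there is a finite dimensional subspace `L` with
`span(⋃_{n≥0} T^n(L)) = φ`. -/
theorem stmt_14 (𝕜 : Type*) [RCLike 𝕜] (T : Module.End 𝕜 (Polynomial 𝕜))
    (hmc : ∃ L : Submodule 𝕜 (Polynomial 𝕜), FiniteDimensional 𝕜 L ∧
      (⨆ n : ℕ, Submodule.map (T ^ n) L) = ⊤) :
    ¬ Function.Surjective ⇑T := fun hT =>
  have ⟨L, hL, hsup⟩ := hmc
  have hcyc : T.IsMulticyclic := ⟨L, L.fg_iff_finiteDimensional.2 hL, hsup⟩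
  Polynomial.not_finite (hcyc.finite_of_surjective hT)
end

section
/- Let X and Y be topological vector spaces and b : X × X → Y a nonzero separately continuous bilinear map, and let T be a continuous linear operator on X which is b-symmetric, i.e., b(Tx, y) = b(x, Ty) for all x, y. Then T ⊕ T is not cyclic on X × X. If in addition b is non-symmetric (b(x,y) ≠ b(y,x) for some x,y), then T² is not cyclic. -/
/-!
If `T` is symmetric for a bilinear map `c`, so are its powers, hence
`c (Tᵃ z) (Tᵇ z) = c z (Tᵃ⁺ᵇ z)`. When `c` is moreover antisymmetric,
`c z (Tⁿ z) = c (Tⁿ z) z = -c z (Tⁿ z)`, so `c` vanishes on pairs of points of the orbit of any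
`z`; if that orbit spans a dense subspace, separate continuity spreads this to the whole space.
Applied to the antisymmetric part `b - b.flip` of `b` this shows that `b` is symmetric as soon as
some `b`-symmetric operator is cyclic. For `T²` this contradicts the non-symmetry of `b`; for
`T ⊕ T` it applies to `β (x, y) (x', y') = b x y'`, and `β` is symmetric only if `b = 0`.
-/

theorem ContinuousLinearMap.prodMap_pow_apply {R M N : Type*} [Semiring R] [TopologicalSpace M]
    [AddCommMonoid M] [Module R M] [TopologicalSpace N] [AddCommMonoid N] [Module R N]
    (f : M →L[R] M) (g : N →L[R] N) (n : ℕ) (p : M × N) :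
    ((f.prodMap g) ^ n) p = ((f ^ n) p.1, (g ^ n) p.2) := by
  induction n generalizing p with
  | zero => rfl
  | succ n ih => simp [pow_succ, ih]

namespace LinearMap

variable {R Z Y : Type*} [CommSemiring R] [AddCommMonoid Z] [Module R Z]

theorem apply_pow_apply_of_symm [AddCommMonoid Y] [Module R Y] (c : Z →ₗ[R] Z →ₗ[R] Y)
    (S : Module.End R Z) (hS : ∀ x y, c (S x) y = c x (S y)) (n : ℕ) (x y : Z) :
    c ((S ^ n) x) y = c x ((S ^ n) y) := by
  induction n generalizing x with
  | zero => rfl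
  | succ n ih =>
    rw [pow_succ, Module.End.mul_apply, ih, hS, ← Module.End.mul_apply, (Commute.self_pow S n).eq]

variable [AddCommGroup Y] [Module R Y]

theorem apply_pow_apply_pow_eq_zero [IsAddTorsionFree Y] (c : Z →ₗ[R] Z →ₗ[R] Y)
    (hanti : ∀ x y, c x y = -c y x) (S : Module.End R Z) (hS : ∀ x y, c (S x) y = c x (S y))
    (z : Z) (a b : ℕ) : c ((S ^ a) z) ((S ^ b) z) = 0 := by
  rw [apply_pow_apply_of_symm c S hS, ← Module.End.mul_apply, ← pow_add]
  have h := apply_pow_apply_of_symm c S hS (a + b) z z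
  rwa [hanti, eq_comm, self_eq_neg] at h

theorem eq_zero_of_antisymm_of_dense_span [TopologicalSpace Z] [TopologicalSpace Y] [T2Space Y]
    (c : Z →ₗ[R] Z →ₗ[R] Y) (hc : ∀ x, Continuous (c x)) (hanti : ∀ x y, c x y = -c y x)
    {s : Set Z} (hs : Dense (Submodule.span R s : Set Z)) (hcs : ∀ x ∈ s, ∀ y ∈ s, c x y = 0) :
    c = 0 := by
  have vanish (x : Z) (hx : ∀ y ∈ s, c x y = 0) : c x = 0 :=
    congrArg ContinuousLinearMap.toLinearMap
      (ContinuousLinearMap.ext_on hs (f := ⟨c x, hc x⟩) (g := 0) hx)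
  have on_s (x : Z) (hx : x ∈ s) : c x = 0 := vanish x (hcs x hx)
  ext x y
  have hy : c y = 0 := vanish y fun w hw => by rw [hanti, on_s w hw, zero_apply, neg_zero]
  simp [hanti x y, hy]

theorem flip_eq_of_dense_span_orbit [TopologicalSpace Z] [TopologicalSpace Y] [ContinuousSub Y]
    [T2Space Y] [IsAddTorsionFree Y] (B : Z →ₗ[R] Z →ₗ[R] Y) (hB₁ : ∀ x, Continuous (B x))
    (hB₂ : ∀ y, Continuous fun x => B x y) (S : Z →L[R] Z) (hS : ∀ x y, B (S x) y = B x (S y))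
    {z : Z} (hz : Dense (Submodule.span R {w | ∃ n : ℕ, w = (S ^ n) z} : Set Z)) :
    B.flip = B := by
  set c := B - B.flip
  have hanti (x y : Z) : c x y = -c y x := by simp [c]
  have hcS (x y : Z) : c ((S : Module.End R Z) x) y = c x ((S : Module.End R Z) y) := by
    simp [c, hS]
  have hc : c = 0 := by
    refine eq_zero_of_antisymm_of_dense_span c (fun x => (hB₁ x).sub (hB₂ x)) hanti hz ?_
    rintro _ ⟨a, rfl⟩ _ ⟨b, rfl⟩
    simpa [← ContinuousLinearMap.toLinearMap_pow] using
      apply_pow_apply_pow_eq_zero c hanti (S : Module.End R Z) hcS z a b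
  exact (sub_eq_zero.mp hc).symm

theorem eq_zero_of_dense_span_orbit_prodMap [TopologicalSpace Z] [TopologicalSpace Y]
    [ContinuousSub Y] [T2Space Y] [IsAddTorsionFree Y] (b : Z →ₗ[R] Z →ₗ[R] Y)
    (hb₁ : ∀ x, Continuous (b x)) (hb₂ : ∀ y, Continuous fun x => b x y) (T : Z →L[R] Z)
    (hT : ∀ x y, b (T x) y = b x (T y)) {v : Z × Z}
    (hv : Dense (Submodule.span R {w | ∃ n : ℕ, w = ((T ^ n) v.1, (T ^ n) v.2)} : Set (Z × Z))) :
    b = 0 := by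
  set β := b.compl₁₂ (fst R Z Z) (snd R Z Z)
  have hβ : β.flip = β :=
    β.flip_eq_of_dense_span_orbit (fun p => (hb₁ p.1).comp continuous_snd)
      (fun q => (hb₂ q.2).comp continuous_fst) (T.prodMap T) (fun p q => hT p.1 q.2)
      (by simpa only [ContinuousLinearMap.prodMap_pow_apply] using hv)
  ext x y
  simpa [β] using congr_fun₂ hβ (0, y) (x, 0)

end LinearMap

theorem stmt_16_general (𝕜 : Type*) [RCLike 𝕜]
    (X : Type*) [AddCommGroup X] [Module 𝕜 X] [TopologicalSpace X]
    (Y : Type*) [AddCommGroup Y] [Module 𝕜 Y] [TopologicalSpace Y]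
    [IsTopologicalAddGroup Y] [T2Space Y]
    (b : X →ₗ[𝕜] X →ₗ[𝕜] Y) (hb : b ≠ 0)
    (hbc₁ : ∀ x : X, Continuous ⇑(b x))
    (hbc₂ : ∀ y : X, Continuous fun x : X => b x y)
    (T : X →L[𝕜] X) (hsym : ∀ x y : X, b (T x) y = b x (T y)) :
    (¬ ∃ v : X × X, Dense ((Submodule.span 𝕜
        {w : X × X | ∃ n : ℕ, w = ((T ^ n) v.1, (T ^ n) v.2)} :
          Submodule 𝕜 (X × X)) : Set (X × X))) ∧
    ((∃ x y : X, b x y ≠ b y x) →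
      ¬ ∃ x : X, Dense ((Submodule.span 𝕜
        {y : X | ∃ n : ℕ, y = ((T ^ 2) ^ n) x} : Submodule 𝕜 X) : Set X)) := by
  have : IsAddTorsionFree Y := .of_isTorsionFree 𝕜 Y
  refine ⟨?_, ?_⟩
  · rintro ⟨v, hv⟩
    exact hb (b.eq_zero_of_dense_span_orbit_prodMap hbc₁ hbc₂ T hsym hv)
  · rintro ⟨x, y, hxy⟩ ⟨z, hz⟩
    have hsym₂ (x y : X) : b ((T ^ 2) x) y = b x ((T ^ 2) y) := by
      simpa [← ContinuousLinearMap.toLinearMap_pow] using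
        b.apply_pow_apply_of_symm (T : Module.End 𝕜 X) hsym 2 x y
    exact hxy (LinearMap.congr_fun₂
      (b.flip_eq_of_dense_span_orbit hbc₁ hbc₂ (T ^ 2) hsym₂ hz) y x)

/-- Let `X` and `Y` be topological vector spaces, `b : X × X → Y` a nonzero separately
continuous bilinear map, and `T` a `b`-symmetric continuous linear operator on `X`
(`b(Tx,y) = b(x,Ty)`). Then `T ⊕ T` is not cyclic on `X × X`; and if moreover `b` is
non-symmetric, then `T²` is not cyclic. -/
theorem stmt_16 (𝕜 : Type*) [RCLike 𝕜]
    (X : Type*) [AddCommGroup X] [Module 𝕜 X] [TopologicalSpace X]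
    [IsTopologicalAddGroup X] [ContinuousSMul 𝕜 X] [T2Space X]
    (Y : Type*) [AddCommGroup Y] [Module 𝕜 Y] [TopologicalSpace Y]
    [IsTopologicalAddGroup Y] [ContinuousSMul 𝕜 Y] [T2Space Y]
    (b : X →ₗ[𝕜] X →ₗ[𝕜] Y) (hb : b ≠ 0)
    (hbc₁ : ∀ x : X, Continuous ⇑(b x))
    (hbc₂ : ∀ y : X, Continuous fun x : X => b x y)
    (T : X →L[𝕜] X) (hsym : ∀ x y : X, b (T x) y = b x (T y)) :
    (¬ ∃ v : X × X, Dense ((Submodule.span 𝕜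
        {w : X × X | ∃ n : ℕ, w = ((T ^ n) v.1, (T ^ n) v.2)} :
          Submodule 𝕜 (X × X)) : Set (X × X))) ∧
    ((∃ x y : X, b x y ≠ b y x) →
      ¬ ∃ x : X, Dense ((Submodule.span 𝕜
        {y : X | ∃ n : ℕ, y = ((T ^ 2) ^ n) x} : Submodule 𝕜 X) : Set X)) :=
  stmt_16_general 𝕜 X Y b hb hbc₁ hbc₂ T hsym
end

section
/- Let g ∈ L∞(μ) for a measure space (Ω, F, μ), 0 < p < ∞, and let T be the multiplication operator Tf = g·f on L_p(μ). If L_p(μ) is infinite dimensional, then T ⊕ T is not cyclic on L_p(μ) × L_p(μ). -/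
/-!
If `(v₁, v₂)` were cyclic for `T ⊕ T`, any two vectors `z, w` of its orbit would satisfy
`z₁ * w₂ = z₂ * w₁` a.e., both sides being `g ^ (m + n) * v₁ * v₂`. This relation is bilinear, so
it passes to the span, and it is closed in each variable, since by Hölder's inequality `f * h`
depends continuously on `f` and on `h` in `L^{p/2}`. Density then makes it hold for all pairs;
for `z = (x, 0)` and `w = (0, x)` it reads `x * x = 0`, so `L^p` would be trivial.
-/

open MeasureTheory
open scoped ENNReal

theorem Dense.forall₂_of_symm {X : Type*} [TopologicalSpace X] {S : Set X} (hS : Dense S)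
    {R : X → X → Prop} (hR : ∀ x y, R x y → R y x) (hclosed : ∀ x, IsClosed {y | R x y})
    (hRS : ∀ x ∈ S, ∀ y ∈ S, R x y) (x y : X) : R x y := by
  have hSX : ∀ x ∈ S, ∀ y, R x y := fun x hx => hS.induction (hRS x hx) (hclosed x)
  have hclosed' : IsClosed {x | R x y} := by
    simpa only [fun x => (⟨hR y x, hR x y⟩ : R y x ↔ R x y)] using hclosed y
  exact hS.induction (P := (R · y)) (fun x hx => hSX x hx y) hclosed' x

theorem Submodule.forall₂_mem_span_of_symm {R M : Type*} [Semiring R] [AddCommMonoid M]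
    [Module R M] {P : M → Submodule R M} (hP : ∀ x y, y ∈ P x → x ∈ P y) {s : Set M}
    (hs : ∀ x ∈ s, ∀ y ∈ s, y ∈ P x) : ∀ x ∈ span R s, ∀ y ∈ span R s, y ∈ P x := by
  have hspan : ∀ x ∈ s, span R s ≤ P x := fun x hx => span_le.2 (hs x hx)
  exact fun x hx y hy => span_le.2 (fun z hz => hP z x (hspan z hz hx)) hy

theorem ENNReal.holderTriple_div_two (p : ℝ≥0∞) : ENNReal.HolderTriple p p (p / 2) :=
  ⟨by rw [ENNReal.inv_div (.inl ENNReal.ofNat_ne_top) (.inl two_ne_zero),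
    ENNReal.div_eq_inv_mul]; ring⟩

namespace MeasureTheory

variable {𝕜 : Type*} [NormedField 𝕜] {Ω : Type*} [MeasurableSpace Ω] {μ : Measure Ω}
  {p : ℝ≥0∞}

theorem eLpNorm_mul_le_div_two {f h : Ω → 𝕜} (hf : AEStronglyMeasurable f μ)
    (hh : AEStronglyMeasurable h μ) :
    eLpNorm (f * h) (p / 2) μ ≤ eLpNorm f p μ * eLpNorm h p μ := by
  have := ENNReal.holderTriple_div_two p
  rw [← smul_eq_mul]
  exact eLpNorm_smul_le_mul_eLpNorm hh hf

namespace Lp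

theorem eLpNorm_coe_sub_self (f : Lp 𝕜 p μ) : eLpNorm ⇑(f - f) p μ = 0 := by
  rw [sub_self, eLpNorm_congr_ae (coeFn_zero 𝕜 p μ), eLpNorm_zero]

/-- The pairs `w` with `b(z₁, w₂) = b(z₂, w₁)` for the bilinear map `b(f, h) = f * h`. -/
def parallelSubmodule (z : Lp 𝕜 p μ × Lp 𝕜 p μ) : Submodule 𝕜 (Lp 𝕜 p μ × Lp 𝕜 p μ) where
  carrier := {w | ⇑z.1 * ⇑w.2 =ᵐ[μ] ⇑z.2 * ⇑w.1}
  zero_mem' := by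
    filter_upwards [coeFn_zero 𝕜 p μ] with ω h0
    simp only [Prod.fst_zero, Prod.snd_zero, Pi.mul_apply, h0, Pi.zero_apply, mul_zero]
  add_mem' {w w'} hw hw' := by
    filter_upwards [hw, hw', coeFn_add w.1 w'.1, coeFn_add w.2 w'.2] with ω h h' h₁ h₂
    simp only [Pi.mul_apply, Prod.fst_add, Prod.snd_add, h₁, h₂, Pi.add_apply] at *
    rw [mul_add, mul_add, h, h']
  smul_mem' c w hw := by
    filter_upwards [hw, coeFn_smul c w.1, coeFn_smul c w.2] with ω h h₁ h₂
    simp only [Pi.mul_apply, Prod.smul_fst, Prod.smul_snd, h₁, h₂, Pi.smul_apply,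
      smul_eq_mul] at *
    linear_combination c * h

theorem mem_parallelSubmodule {z w : Lp 𝕜 p μ × Lp 𝕜 p μ} :
    w ∈ parallelSubmodule z ↔ ⇑z.1 * ⇑w.2 =ᵐ[μ] ⇑z.2 * ⇑w.1 := Iff.rfl

theorem mem_parallelSubmodule_comm {z w : Lp 𝕜 p μ × Lp 𝕜 p μ} :
    w ∈ parallelSubmodule z ↔ z ∈ parallelSubmodule w := by
  simp only [mem_parallelSubmodule, mul_comm (⇑w.1), mul_comm (⇑w.2)]
  exact ⟨Filter.EventuallyEq.symm, Filter.EventuallyEq.symm⟩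

theorem eq_zero_of_mem_parallelSubmodule {x : Lp 𝕜 p μ}
    (hx : ((0 : Lp 𝕜 p μ), x) ∈ parallelSubmodule (x, 0)) : x = 0 := by
  refine ext ?_
  filter_upwards [mem_parallelSubmodule.1 hx, coeFn_zero 𝕜 p μ] with ω h h0
  rw [Pi.mul_apply, Pi.mul_apply, h0, Pi.zero_apply, mul_zero, mul_self_eq_zero] at h
  rw [h, h0, Pi.zero_apply]

theorem eLpNorm_sub_le_of_mem_parallelSubmodule {z w w' : Lp 𝕜 p μ × Lp 𝕜 p μ}
    (hw' : w' ∈ parallelSubmodule z) :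
    eLpNorm (⇑z.1 * ⇑w.2 - ⇑z.2 * ⇑w.1) (p / 2) μ ≤ ENNReal.LpAddConst (p / 2) *
      (eLpNorm z.2 p μ * eLpNorm ⇑(w'.1 - w.1) p μ +
        eLpNorm z.1 p μ * eLpNorm ⇑(w'.2 - w.2) p μ) := by
  have hdecomp : ⇑z.1 * ⇑w.2 - ⇑z.2 * ⇑w.1 =ᵐ[μ]
      ⇑z.2 * ⇑(w'.1 - w.1) - ⇑z.1 * ⇑(w'.2 - w.2) := by
    filter_upwards [mem_parallelSubmodule.1 hw', coeFn_sub w'.1 w.1, coeFn_sub w'.2 w.2]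
      with ω h h₁ h₂
    simp only [Pi.mul_apply] at h
    simp only [Pi.sub_apply, Pi.mul_apply, h₁, h₂]
    linear_combination h
  have hmeas (f h : Lp 𝕜 p μ) : AEStronglyMeasurable (⇑f * ⇑h) μ :=
    (Lp.aestronglyMeasurable f).mul (Lp.aestronglyMeasurable h)
  rw [eLpNorm_congr_ae hdecomp]
  refine (eLpNorm_sub_le' (hmeas _ _) (hmeas _ _) _).trans ?_
  gcongr <;>
    exact eLpNorm_mul_le_div_two (Lp.aestronglyMeasurable _) (Lp.aestronglyMeasurable _)

section Topology

variable [tL : TopologicalSpace (Lp 𝕜 p μ)]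

theorem pow_apply_ae_eq {g : Ω → 𝕜} {T : Lp 𝕜 p μ →L[𝕜] Lp 𝕜 p μ}
    (hT : ∀ f : Lp 𝕜 p μ, ⇑(T f) =ᵐ[μ] fun ω => g ω * f ω) (n : ℕ) (f : Lp 𝕜 p μ) :
    ⇑((T ^ n) f) =ᵐ[μ] fun ω => g ω ^ n * f ω := by
  induction n with
  | zero => simp only [pow_zero, one_apply_eq_self, one_mul]; rfl
  | succ n ih =>
    rw [pow_succ', mul_apply_eq_comp]
    filter_upwards [hT ((T ^ n) f), ih] with ω h₁ h₂
    rw [h₁, h₂, pow_succ']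
    ring

theorem pow_mem_parallelSubmodule_pow {g : Ω → 𝕜} {T : Lp 𝕜 p μ →L[𝕜] Lp 𝕜 p μ}
    (hT : ∀ f : Lp 𝕜 p μ, ⇑(T f) =ᵐ[μ] fun ω => g ω * f ω) (v : Lp 𝕜 p μ × Lp 𝕜 p μ)
    (m n : ℕ) : ((T ^ n) v.1, (T ^ n) v.2) ∈ parallelSubmodule ((T ^ m) v.1, (T ^ m) v.2) := by
  filter_upwards [pow_apply_ae_eq hT m v.1, pow_apply_ae_eq hT m v.2,
    pow_apply_ae_eq hT n v.1, pow_apply_ae_eq hT n v.2] with ω h₁ h₂ h₃ h₄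
  simp only [Pi.mul_apply, h₁, h₂, h₃, h₄]
  ring

theorem isOpen_setOf_eLpNorm_sub_lt
    (htL : tL = TopologicalSpace.generateFrom
      {s : Set (Lp 𝕜 p μ) | ∃ (f : Lp 𝕜 p μ) (ε : ℝ≥0∞), 0 < ε ∧
        s = {h : Lp 𝕜 p μ | eLpNorm (⇑(h - f)) p μ < ε}})
    (f : Lp 𝕜 p μ) {ε : ℝ≥0∞} (hε : 0 < ε) :
    IsOpen {h : Lp 𝕜 p μ | eLpNorm ⇑(h - f) p μ < ε} := by
  rw [htL]
  exact TopologicalSpace.isOpen_generateFrom_of_mem ⟨f, ε, hε, rfl⟩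

variable (hball : ∀ (f : Lp 𝕜 p μ) {ε : ℝ≥0∞}, 0 < ε → IsOpen {h | eLpNorm ⇑(h - f) p μ < ε})
include hball

theorem exists_mem_eLpNorm_sub_lt_of_mem_closure {s : Set (Lp 𝕜 p μ × Lp 𝕜 p μ)}
    {w : Lp 𝕜 p μ × Lp 𝕜 p μ} (hw : w ∈ closure s) {ε : ℝ≥0∞} (hε : 0 < ε) :
    ∃ w' ∈ s, eLpNorm ⇑(w'.1 - w.1) p μ < ε ∧ eLpNorm ⇑(w'.2 - w.2) p μ < ε := by
  have hcenter (f : Lp 𝕜 p μ) : eLpNorm ⇑(f - f) p μ < ε := by rwa [eLpNorm_coe_sub_self]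
  obtain ⟨w', ⟨h₁, h₂⟩, hw'⟩ := mem_closure_iff.1 hw _
    ((hball w.1 hε).prod (hball w.2 hε)) ⟨hcenter w.1, hcenter w.2⟩
  exact ⟨w', hw', h₁, h₂⟩

theorem isClosed_parallelSubmodule (hp₀ : p ≠ 0) (z : Lp 𝕜 p μ × Lp 𝕜 p μ) :
    IsClosed (parallelSubmodule z : Set (Lp 𝕜 p μ × Lp 𝕜 p μ)) := by
  refine isClosed_of_closure_subset fun w hw => ?_
  have hmeas : AEStronglyMeasurable (⇑z.1 * ⇑w.2 - ⇑z.2 * ⇑w.1) μ :=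
    ((Lp.aestronglyMeasurable _).mul (Lp.aestronglyMeasurable _)).sub
      ((Lp.aestronglyMeasurable _).mul (Lp.aestronglyMeasurable _))
  have hK : ENNReal.LpAddConst (p / 2) * (eLpNorm z.2 p μ + eLpNorm z.1 p μ) ≠ ∞ :=
    ENNReal.mul_ne_top (ENNReal.LpAddConst_lt_top _).ne
      (ENNReal.add_ne_top.2 ⟨(Lp.eLpNorm_lt_top _).ne, (Lp.eLpNorm_lt_top _).ne⟩)
  have hzero : eLpNorm (⇑z.1 * ⇑w.2 - ⇑z.2 * ⇑w.1) (p / 2) μ = 0 := by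
    by_contra hne
    obtain ⟨ε, hε, hεK⟩ := ENNReal.exists_nnreal_pos_mul_lt hK hne
    obtain ⟨w', hw', h₁, h₂⟩ :=
      exists_mem_eLpNorm_sub_lt_of_mem_closure hball hw (ENNReal.coe_pos.2 hε)
    refine hεK.not_ge ((eLpNorm_sub_le_of_mem_parallelSubmodule hw').trans ?_)
    calc _ ≤ ENNReal.LpAddConst (p / 2) * (eLpNorm z.2 p μ * ε + eLpNorm z.1 p μ * ε) := by
          gcongr
      _ = _ := by ring
  have hp : p / 2 ≠ 0 := (ENNReal.div_pos hp₀ ENNReal.ofNat_ne_top).ne'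
  exact Filter.eventuallyEq_iff_sub.2 ((eLpNorm_eq_zero_iff hmeas hp).1 hzero)

end Topology

end Lp

end MeasureTheory

theorem stmt_17_general (𝕜 : Type*) [RCLike 𝕜] {Ω : Type*} [MeasurableSpace Ω] (μ : Measure Ω)
    (p : ℝ≥0∞) (hp₀ : 0 < p)
    [tL : TopologicalSpace (Lp 𝕜 p μ)]
    (htL : tL = TopologicalSpace.generateFrom
      {s : Set (Lp 𝕜 p μ) | ∃ (f : Lp 𝕜 p μ) (ε : ℝ≥0∞), 0 < ε ∧
        s = {h : Lp 𝕜 p μ | eLpNorm (⇑(h - f)) p μ < ε}})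
    (g : Ω → 𝕜)
    (T : Lp 𝕜 p μ →L[𝕜] Lp 𝕜 p μ)
    (hT : ∀ f : Lp 𝕜 p μ, ⇑(T f) =ᵐ[μ] fun ω => g ω * f ω)
    (hinf : ¬ FiniteDimensional 𝕜 (Lp 𝕜 p μ)) :
    ¬ ∃ v : Lp 𝕜 p μ × Lp 𝕜 p μ, Dense ((Submodule.span 𝕜
        {w : Lp 𝕜 p μ × Lp 𝕜 p μ | ∃ n : ℕ, w = ((T ^ n) v.1, (T ^ n) v.2)} :
          Submodule 𝕜 (Lp 𝕜 p μ × Lp 𝕜 p μ)) : Set (Lp 𝕜 p μ × Lp 𝕜 p μ)) := by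
  rintro ⟨v, hdense⟩
  have hall : ∀ z w : Lp 𝕜 p μ × Lp 𝕜 p μ, w ∈ Lp.parallelSubmodule z := by
    refine hdense.forall₂_of_symm (fun _ _ => Lp.mem_parallelSubmodule_comm.1)
      (Lp.isClosed_parallelSubmodule (Lp.isOpen_setOf_eLpNorm_sub_lt htL) hp₀.ne')
      (Submodule.forall₂_mem_span_of_symm (fun _ _ => Lp.mem_parallelSubmodule_comm.1) ?_)
    rintro _ ⟨m, rfl⟩ _ ⟨n, rfl⟩
    exact Lp.pow_mem_parallelSubmodule_pow hT v m n
  have : Subsingleton (Lp 𝕜 p μ) := ⟨fun x y =>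
    (Lp.eq_zero_of_mem_parallelSubmodule (hall _ _)).trans
      (Lp.eq_zero_of_mem_parallelSubmodule (hall _ _)).symm⟩
  exact hinf inferInstance

/-- Let `g ∈ L∞(μ)`, `0 < p < ∞`, and `T` the multiplication operator `Tf = g·f` on
`L_p(μ)`. If `L_p(μ)` is infinite dimensional, then `T ⊕ T` is not cyclic on
`L_p(μ) × L_p(μ)`. The topology of `L_p(μ)` (also for `0 < p < 1`) is the one
generated by the `eLpNorm` balls. -/
theorem stmt_17 (𝕜 : Type*) [RCLike 𝕜] {Ω : Type*} [MeasurableSpace Ω] (μ : Measure Ω)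
    (p : ℝ≥0∞) (hp₀ : 0 < p) (hp : p ≠ ∞)
    [tL : TopologicalSpace (Lp 𝕜 p μ)]
    (htL : tL = TopologicalSpace.generateFrom
      {s : Set (Lp 𝕜 p μ) | ∃ (f : Lp 𝕜 p μ) (ε : ℝ≥0∞), 0 < ε ∧
        s = {h : Lp 𝕜 p μ | eLpNorm (⇑(h - f)) p μ < ε}})
    (g : Ω → 𝕜) (hg : MemLp g ∞ μ)
    (T : Lp 𝕜 p μ →L[𝕜] Lp 𝕜 p μ)
    (hT : ∀ f : Lp 𝕜 p μ, ⇑(T f) =ᵐ[μ] fun ω => g ω * f ω)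
    (hinf : ¬ FiniteDimensional 𝕜 (Lp 𝕜 p μ)) :
    ¬ ∃ v : Lp 𝕜 p μ × Lp 𝕜 p μ, Dense ((Submodule.span 𝕜
        {w : Lp 𝕜 p μ × Lp 𝕜 p μ | ∃ n : ℕ, w = ((T ^ n) v.1, (T ^ n) v.2)} :
          Submodule 𝕜 (Lp 𝕜 p μ × Lp 𝕜 p μ)) : Set (Lp 𝕜 p μ × Lp 𝕜 p μ)) :=
  stmt_17_general 𝕜 μ p hp₀ (tL := tL) htL g T hT hinf
end

section
/- Let w ∈ ℓ∞(ℤ) be a weight sequence with |w_n| = |w_{-n}| for all n ∈ ℤ, T_w the bilateral weighted shift on complex ℓ₂(ℤ) (T_w e_n = w_n e_{n-1}), and p a polynomial with real coefficients. Then p(T_w) is not ℝ-cyclic: there is no x such that the real-linear span of {p(T_w)^n x : n ≥ 0} is dense in ℓ₂(ℤ). -/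
/-!
The weighted shift `T` is symmetric with respect to a twisted reflection: if `θ` is a discrete
primitive of `arg w` and `φ n = θ (-1 - n) - θ n`, the operator `K` with
`(K x) n = exp (i φ n) x (-1 - n)` is self-adjoint, injective, and satisfies `K T = T⋆ K`; the last
identity is exactly where `|w n| = |w (-n)|` enters. Since `p` has real coefficients,
`K p(T) = p(T)⋆ K`, so `⟪K x, p(T) ^ n x⟫` is real for every `n`. If the real span of the orbit of
`x` were dense, the real-linear functional `v ↦ Im ⟪K x, v⟫` would vanish, so `K x = 0`, `x = 0`,
and the orbit of `0` spans nothing.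
-/

open Complex Polynomial
open scoped InnerProductSpace lp ComplexConjugate

theorem Int.exists_eq_sub_one_add {G : Type*} [AddCommGroup G] (a : ℤ → G) :
    ∃ θ : ℤ → G, ∀ n, θ n = θ (n - 1) + a n := by
  refine ⟨fun n => ∑ k ∈ Finset.Ioc 0 n, a k - ∑ k ∈ Finset.Ioc n 0, a k, fun n => ?_⟩
  dsimp only
  rcases lt_or_ge 0 n with hn | hn
  · have h : Finset.Ioc 0 n = insert n (Finset.Ioc 0 (n - 1)) := by
      ext k; simp only [Finset.mem_Ioc, Finset.mem_insert]; omega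
    rw [h, Finset.sum_insert (by simp), Finset.Ioc_eq_empty_of_le hn.le,
      Finset.Ioc_eq_empty_of_le (show 0 ≤ n - 1 by omega)]
    abel
  · have h : Finset.Ioc (n - 1) 0 = insert n (Finset.Ioc n 0) := by
      ext k; simp only [Finset.mem_Ioc, Finset.mem_insert]; omega
    rw [h, Finset.sum_insert (by simp), Finset.Ioc_eq_empty_of_le hn,
      Finset.Ioc_eq_empty_of_le (show n - 1 ≤ 0 by omega)]
    abel

theorem SemiconjBy.aeval {R A : Type*} [CommSemiring R] [Semiring A] [Algebra R A] {k a b : A}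
    (h : SemiconjBy k a b) (p : R[X]) : SemiconjBy k (aeval a p) (aeval b p) := by
  induction p using Polynomial.induction_on' with
  | add p q hp hq => simpa only [map_add] using hp.add_right hq
  | monomial n r => simpa only [aeval_monomial, Algebra.smul_def] using (h.pow_right n).smul_right r

theorem star_aeval_map_ofReal {A : Type*} [Semiring A] [StarRing A] [Algebra ℂ A] [StarModule ℂ A]
    (a : A) (p : ℝ[X]) :
    star (aeval a (p.map (algebraMap ℝ ℂ))) = aeval (star a) (p.map (algebraMap ℝ ℂ)) := by
  induction p using Polynomial.induction_on' with
  | add p q hp hq => simp only [Polynomial.map_add, map_add, star_add, hp, hq]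
  | monomial n r =>
    simp only [Polynomial.map_monomial, aeval_monomial, star_mul, star_pow, ← algebraMap_star_comm]
    rw [star_trivial r, Algebra.commutes]

theorem eq_zero_of_im_inner_eq_zero_of_dense_span {E : Type*} [NormedAddCommGroup E]
    [InnerProductSpace ℂ E] {s : Set E}
    (hs : Dense (Submodule.span ℝ s : Set E)) {u : E} (hu : ∀ y ∈ s, (⟪u, y⟫_ℂ).im = 0) :
    u = 0 := by
  let F : E →L[ℝ] ℝ := imCLM.comp ((innerSL ℂ u).restrictScalars ℝ)
  have hF : F = 0 := ContinuousLinearMap.ext_on hs hu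
  have h : (⟪u, I • u⟫_ℂ).im = 0 := congr($hF (I • u))
  simpa [inner_smul_right, ← ofReal_pow] using h

section
variable {H : Type*} [NormedAddCommGroup H] [InnerProductSpace ℂ H] [CompleteSpace H]
  {K A : H →L[ℂ] H}

theorem im_inner_apply_pow_apply_eq_zero (hK : IsSelfAdjoint K) (hKA : SemiconjBy K A (star A))
    (x : H) (n : ℕ) : (⟪K x, (A ^ n) x⟫_ℂ).im = 0 := by
  rw [← conj_eq_iff_im]
  calc (starRingEnd ℂ) ⟪K x, (A ^ n) x⟫_ℂ = ⟪K ((A ^ n) x), x⟫_ℂ := by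
        rw [inner_conj_symm]; exact (hK.isSymmetric _ _).symm
    _ = ⟪star (A ^ n) (K x), x⟫_ℂ := by
        rw [← mul_apply_eq_comp, (hKA.pow_right n).eq, star_pow]; rfl
    _ = ⟪K x, (A ^ n) x⟫_ℂ := by
        rw [ContinuousLinearMap.star_eq_adjoint, ContinuousLinearMap.adjoint_inner_left]

theorem not_dense_span_orbit [Nontrivial H] (hK : IsSelfAdjoint K) (hKinj : Function.Injective K)
    (hKA : SemiconjBy K A (star A)) (x : H) :
    ¬ Dense (Submodule.span ℝ (Set.range fun n : ℕ => (A ^ n) x) : Set H) := by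
  intro hx
  have hKx : K x = 0 := eq_zero_of_im_inner_eq_zero_of_dense_span hx <| by
    rintro _ ⟨n, rfl⟩
    exact im_inner_apply_pow_apply_eq_zero hK hKA x n
  have hx0 : x = 0 := hKinj (hKx.trans K.map_zero.symm)
  obtain ⟨u, hu⟩ := exists_ne (0 : H)
  refine hu (eq_zero_of_im_inner_eq_zero_of_dense_span hx ?_)
  rintro _ ⟨n, rfl⟩
  simp [hx0]

end

instance lp.instNontrivial {ι : Type*} [Nonempty ι] {E : ι → Type*} [∀ i, NormedAddCommGroup (E i)]
    [∀ i, Nontrivial (E i)] {p : ENNReal} : Nontrivial (lp E p) := by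
  classical
  obtain ⟨i⟩ := ‹Nonempty ι›
  obtain ⟨a, ha⟩ := exists_ne (0 : E i)
  exact nontrivial_of_ne (lp.single p i a) 0 fun h => ha (by simpa using congr($h i))

section
variable (φ : ℤ → ℝ)

theorem memℓp_phasedReflection (x : ℓ²(ℤ, ℂ)) :
    Memℓp (fun n => exp (φ n * I) * x (-1 - n)) 2 := by
  refine memℓp_gen (((Equiv.subLeft (-1 : ℤ)).summable_iff).mpr
    ((lp.memℓp x).summable (by norm_num)) |>.congr fun n => ?_)
  simp [norm_exp_ofReal_mul_I]

noncomputable def phasedReflection : ℓ²(ℤ, ℂ) →ₗ[ℂ] ℓ²(ℤ, ℂ) where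
  toFun x := ⟨_, memℓp_phasedReflection φ x⟩
  map_add' x y := lp.ext <| funext fun n => by
    simp only [lp.coeFn_add, Pi.add_apply, mul_add]
  map_smul' c x := lp.ext <| funext fun n => by
    simp only [lp.coeFn_smul, Pi.smul_apply, smul_eq_mul, RingHom.id_apply]
    ring

theorem phasedReflection_apply (x : ℓ²(ℤ, ℂ)) (n : ℤ) :
    phasedReflection φ x n = exp (φ n * I) * x (-1 - n) := rfl

theorem phasedReflection_injective : Function.Injective (phasedReflection φ) := by
  refine (injective_iff_map_eq_zero _).mpr fun x hx => lp.ext <| funext fun n => ?_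
  have h := congr($hx (-1 - n))
  simpa [phasedReflection_apply, exp_ne_zero] using h

theorem isSymmetric_phasedReflection (hφ : ∀ n, φ (-1 - n) = -φ n) :
    (phasedReflection φ).IsSymmetric := by
  intro y z
  rw [lp.inner_eq_tsum, lp.inner_eq_tsum, ← (Equiv.subLeft (-1 : ℤ)).tsum_eq]
  refine tsum_congr fun n => ?_
  simp only [Equiv.subLeft_apply, RCLike.inner_apply, phasedReflection_apply, hφ,
    sub_sub_cancel, map_mul, ← exp_conj, map_neg, conj_ofReal, conj_I, ofReal_neg, neg_mul_neg]
  ring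

theorem semiconjBy_weightedShift_star_of_phase {w : ℤ → ℂ}
    (hφw : ∀ n, exp (φ n * I) * w (-n) = exp (φ (n - 1) * I) * conj (w n))
    (K T : ℓ²(ℤ, ℂ) →L[ℂ] ℓ²(ℤ, ℂ)) (hK : ∀ x, K x = phasedReflection φ x)
    (hT : ∀ (x : ℓ²(ℤ, ℂ)) (n : ℤ), T x n = w (n + 1) * x (n + 1)) :
    SemiconjBy K T (star T) := by
  refine ContinuousLinearMap.ext fun y => ext_inner_right ℂ fun z => ?_
  rw [mul_apply_eq_comp, mul_apply_eq_comp, ContinuousLinearMap.star_eq_adjoint,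
    ContinuousLinearMap.adjoint_inner_left, hK, hK, lp.inner_eq_tsum, lp.inner_eq_tsum]
  conv_rhs => rw [← (Equiv.subRight (1 : ℤ)).tsum_eq]
  refine tsum_congr fun n => ?_
  simp only [Equiv.subRight_apply, RCLike.inner_apply, phasedReflection_apply, hT, sub_add_cancel,
    show ∀ m : ℤ, -1 - m + 1 = -m from fun m => by ring,
    show ∀ m : ℤ, -1 - (m - 1) = -m from fun m => by ring, map_mul]
  have h := congr(conj $(hφw n))
  simp only [map_mul, conj_conj] at h
  linear_combination (conj (y (-n)) * z n) * h

end

theorem exists_phase_of_norm_eq_norm_neg (w : ℤ → ℂ) (hw : ∀ n, ‖w n‖ = ‖w (-n)‖) :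
    ∃ φ : ℤ → ℝ, (∀ n, φ (-1 - n) = -φ n) ∧
      ∀ n, exp (φ n * I) * w (-n) = exp (φ (n - 1) * I) * conj (w n) := by
  obtain ⟨θ, hθ⟩ := Int.exists_eq_sub_one_add fun n => arg (w n)
  refine ⟨fun n => θ (-1 - n) - θ n, fun n => by simp only [sub_sub_cancel, neg_sub], fun n => ?_⟩
  have hφ : θ (-1 - n) - θ n + arg (w (-n)) = θ (-1 - (n - 1)) - θ (n - 1) - arg (w n) := by
    have h := hθ (-n)
    rw [show -n - 1 = -1 - n by ring] at h
    rw [show -1 - (n - 1) = -n by ring]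
    linarith [hθ n]
  conv_lhs => rw [← norm_mul_exp_arg_mul_I (w (-n)), ← hw n]
  conv_rhs => rw [← norm_mul_exp_arg_mul_I (w n)]
  rw [map_mul, conj_ofReal, ← exp_conj, mul_left_comm, ← exp_add, mul_left_comm (exp _), ← exp_add]
  congr 2
  have hφ' := congr((($hφ : ℝ) : ℂ))
  push_cast at hφ' ⊢
  simp only [map_mul, conj_ofReal, conj_I]
  linear_combination I * hφ'

theorem stmt_18_general (w : ℤ → ℂ)
    (hsymm : ∀ n : ℤ, ‖w n‖ = ‖w (-n)‖)
    (T : lp (fun _ : ℤ => ℂ) 2 →L[ℂ] lp (fun _ : ℤ => ℂ) 2)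
    (hT : ∀ (x : lp (fun _ : ℤ => ℂ) 2) (n : ℤ), (T x) n = w (n + 1) * x (n + 1))
    (p : Polynomial ℝ) :
    ¬ ∃ x : lp (fun _ : ℤ => ℂ) 2,
      Dense ((Submodule.span ℝ
        {y : lp (fun _ : ℤ => ℂ) 2 | ∃ n : ℕ,
          y = ((Polynomial.aeval T (p.map (algebraMap ℝ ℂ))) ^ n) x} :
            Submodule ℝ (lp (fun _ : ℤ => ℂ) 2)) : Set (lp (fun _ : ℤ => ℂ) 2)) := by
  rintro ⟨x, hx⟩
  obtain ⟨φ, hφ, hφw⟩ := exists_phase_of_norm_eq_norm_neg w hsymm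
  let K := (isSymmetric_phasedReflection φ hφ).toSelfAdjoint
  have hKT : SemiconjBy (K : ℓ²(ℤ, ℂ) →L[ℂ] ℓ²(ℤ, ℂ)) T (star T) :=
    semiconjBy_weightedShift_star_of_phase φ hφw _ T (fun _ => rfl) hT
  have hKA := hKT.aeval (p.map (algebraMap ℝ ℂ))
  rw [← star_aeval_map_ofReal] at hKA
  -- The `ℝ`-module structure in `hx` is `lp`'s own; it agrees with the one restricted from `ℂ`
  -- only up to unfolding, which `exact` sees through.
  rw [show {y | ∃ n : ℕ, y = (aeval T (p.map (algebraMap ℝ ℂ)) ^ n) x}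
      = Set.range fun n => (aeval T (p.map (algebraMap ℝ ℂ)) ^ n) x by
    ext; simp [eq_comm]] at hx
  exact not_dense_span_orbit K.2 (phasedReflection_injective φ) hKA x hx

/-- Let `w ∈ ℓ∞(ℤ)` be a weight sequence with `|w_n| = |w_{-n}|` for all `n`, `T_w` the
bilateral weighted shift on complex `ℓ₂(ℤ)` (`T_w e_n = w_n e_{n-1}`, equivalently
`(T_w x)(n) = w_{n+1} x_{n+1}`), and `p` a polynomial with real coefficients. Then
`p(T_w)` is not `ℝ`-cyclic: no vector has orbit under `p(T_w)` with dense real-linear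
span. -/
theorem stmt_18 (w : ℤ → ℂ) (hw : ∃ C : ℝ, ∀ n : ℤ, ‖w n‖ ≤ C)
    (hsymm : ∀ n : ℤ, ‖w n‖ = ‖w (-n)‖)
    (T : lp (fun _ : ℤ => ℂ) 2 →L[ℂ] lp (fun _ : ℤ => ℂ) 2)
    (hT : ∀ (x : lp (fun _ : ℤ => ℂ) 2) (n : ℤ), (T x) n = w (n + 1) * x (n + 1))
    (p : Polynomial ℝ) :
    ¬ ∃ x : lp (fun _ : ℤ => ℂ) 2,
      Dense ((Submodule.span ℝ
        {y : lp (fun _ : ℤ => ℂ) 2 | ∃ n : ℕ,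
          y = ((Polynomial.aeval T (p.map (algebraMap ℝ ℂ))) ^ n) x} :
            Submodule ℝ (lp (fun _ : ℤ => ℂ) 2)) : Set (lp (fun _ : ℤ => ℂ) 2)) :=
  stmt_18_general w hsymm T hT p
end
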